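/- arXiv:1901.04261 — 9 statements merged into one kernel-verified Lean document; each statement's English description precedes it below -/
import Mathlib

section
/- Let Δ be a 2-local inner derivation on the Witt algebra W (i.e., for all x, y ∈ W there exists a ∈ W with Δ(x) = [a,x] and Δ(y) = [a,y]). If Δ(e_0) = Δ(e_1) = 0, then Δ(e_i) = 0 for all i ∈ ℤ. -/
section Aux

variable {K L : Type*} [Field K] [CharZero K] [LieRing L] [LieAlgebra K L]

/-- Right bracket as a linear map. -/
private def rbr (x : L) : L →ₗ[K] L where
  toFun a := ⁅a, x⁆
  map_add' a b := add_lie a b x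
  map_smul' c a := smul_lie c a x

private lemma key_repr (e : Module.Basis ℤ K L)
    (hb : ∀ i j : ℤ, ⁅e i, e j⁆ = ((j - i : ℤ) : K) • e (i + j))
    (a : L) (i m : ℤ) :
    e.repr ⁅a, e i⁆ m = e.repr a (m - i) * ((2 * i - m : ℤ) : K) := by
  have : (Finsupp.lapply m ∘ₗ (e.repr.toLinearMap.comp (rbr (e i) : L →ₗ[K] L)))
      = ((2 * i - m : ℤ) : K) • (Finsupp.lapply (m - i) ∘ₗ e.repr.toLinearMap) := by
    apply e.ext
    intro k
    simp only [LinearMap.comp_apply, LinearMap.smul_apply, Finsupp.lapply_apply,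
      LinearEquiv.coe_coe, rbr, LinearMap.coe_mk, AddHom.coe_mk]
    rw [hb k i]
    by_cases h : k = m - i
    · subst h
      simp only [map_smul, Finsupp.smul_apply, e.repr_self_apply]
      have h1 : m - i + i = m := by ring
      rw [h1]
      simp only [if_pos rfl, smul_eq_mul, mul_one]
      push_cast
      ring
    · have h1 : k + i ≠ m := fun hc => h (by omega)
      simp only [map_smul, Finsupp.smul_apply, e.repr_self_apply, smul_eq_mul]
      rw [if_neg h1, if_neg h, mul_zero, mul_zero]
  have := LinearMap.congr_fun this a
  simpa [rbr, mul_comm] using this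

/-- If `⁅a, e i⁆ = 0` then `a = (e.repr a i) • e i`. -/
private lemma central (e : Module.Basis ℤ K L)
    (hb : ∀ i j : ℤ, ⁅e i, e j⁆ = ((j - i : ℤ) : K) • e (i + j))
    (a : L) (i : ℤ) (h : ⁅a, e i⁆ = 0) :
    a = e.repr a i • e i := by
  have hco : ∀ k : ℤ, k ≠ i → e.repr a k = 0 := by
    intro k hk
    have := key_repr e hb a i (k + i)
    rw [h] at this
    simp only [map_zero, Finsupp.coe_zero, Pi.zero_apply] at this
    have h2 : ((2 * i - (k + i) : ℤ) : K) ≠ 0 := by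
      have : (2 * i - (k + i) : ℤ) ≠ 0 := by omega
      exact_mod_cast this
    have h3 : e.repr a (k + i - i) = 0 := by
      rcases mul_eq_zero.mp this.symm with h' | h'
      · exact h'
      · exact absurd h' h2
    simpa using h3
  apply e.repr.injective
  ext m
  by_cases hm : m = i
  · subst hm
    simp [e.repr_self_apply]
  · simp only [map_smul, Finsupp.smul_apply, e.repr_self_apply, if_neg (Ne.symm hm),
      smul_eq_mul, mul_zero]
    exact hco m hm

end Aux

/-- A 2-local inner derivation `Δ` on the Witt algebra with `Δ (e 0) = Δ (e 1) = 0`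
vanishes on all basis elements. -/
theorem witt_twoLocal_vanishing_on_basis {K L : Type*} [Field K] [CharZero K]
    [LieRing L] [LieAlgebra K L]
    (e : Module.Basis ℤ K L)
    (hb : ∀ i j : ℤ, ⁅e i, e j⁆ = ((j - i : ℤ) : K) • e (i + j))
    (Δ : L → L)
    (h2loc : ∀ x y : L, ∃ a : L, Δ x = ⁅a, x⁆ ∧ Δ y = ⁅a, y⁆)
    (h0 : Δ (e 0) = 0) (h1 : Δ (e 1) = 0) :
    ∀ i : ℤ, Δ (e i) = 0 := by
  intro i
  obtain ⟨a, ha0, hai⟩ := h2loc (e 0) (e i)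
  obtain ⟨b, hb1, hbi⟩ := h2loc (e 1) (e i)
  rw [h0] at ha0
  rw [h1] at hb1
  -- a = c • e 0, b = c' • e 1
  have haeq := central e hb a 0 ha0.symm
  have hbeq := central e hb b 1 hb1.symm
  set c := e.repr a 0 with hc
  set c' := e.repr b 1 with hc'
  have hΔa : Δ (e i) = (c * ((i : ℤ) : K)) • e i := by
    rw [hai, haeq, smul_lie, hb 0 i]
    rw [smul_smul]
    norm_num
  have hΔb : Δ (e i) = (c' * ((i - 1 : ℤ) : K)) • e (1 + i) := by
    rw [hbi, hbeq, smul_lie, hb 1 i, smul_smul]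
  -- compare coefficient at i
  have hcoef : c * ((i : ℤ) : K) = 0 := by
    have h1' := congrArg (fun x => e.repr x i) hΔa
    have h2' := congrArg (fun x => e.repr x i) hΔb
    simp only [map_smul, Finsupp.smul_apply, e.repr_self_apply, smul_eq_mul] at h1' h2'
    rw [if_pos trivial, mul_one] at h1'
    rw [if_neg (by omega : (1 : ℤ) + i ≠ i), mul_zero] at h2'
    rw [h2'] at h1'
    exact h1'.symm
  rw [hΔa, hcoef, zero_smul]
end

section
/- Let Δ be a 2-local inner derivation on the Witt algebra W such that Δ(e_i) = 0 for all i ∈ ℤ. Then Δ(x) = 0 for all x ∈ W. -/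
/-- Coefficient formula for the bracket with a basis vector. -/
theorem witt_repr_lie {K L : Type*} [Field K] [CharZero K]
    [LieRing L] [LieAlgebra K L]
    (e : Module.Basis ℤ K L)
    (hb : ∀ i j : ℤ, ⁅e i, e j⁆ = ((j - i : ℤ) : K) • e (i + j))
    (a : L) (n k : ℤ) :
    e.repr ⁅a, e n⁆ (k + n) = ((n - k : ℤ) : K) * e.repr a k := by
  have hsum : ∀ (s : Finset ℤ) (f : ℤ → L), ⁅∑ i ∈ s, f i, e n⁆ = ∑ i ∈ s, ⁅f i, e n⁆ := by
    intro s f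
    induction s using Finset.induction_on with
    | empty => simp
    | insert _ _ hns ih => rw [Finset.sum_insert hns, Finset.sum_insert hns, add_lie, ih]
  conv_lhs => rw [← e.linearCombination_repr a]
  rw [Finsupp.linearCombination_apply, Finsupp.sum, hsum]
  simp only [smul_lie, hb]
  rw [map_sum]
  simp only [smul_smul, map_smul, Module.Basis.repr_self]
  rw [Finsupp.finset_sum_apply]
  simp only [Finsupp.smul_apply, Finsupp.single_apply]
  rw [Finset.sum_eq_single k]
  · by_cases hk : k ∈ (e.repr a).support
    · simp [mul_comm]
    · have : e.repr a k = 0 := Finsupp.notMem_support_iff.mp hk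
      simp [this]
  · intro i _ hik
    have : ¬ (i + n = k + n) := by omega
    simp [this]
  · intro hk
    have : e.repr a k = 0 := Finsupp.notMem_support_iff.mp hk
    simp [this]

/-- A 2-local inner derivation `Δ` on the Witt algebra vanishing on all basis
elements is identically zero. -/
theorem witt_twoLocal_vanishing {K L : Type*} [Field K] [CharZero K]
    [LieRing L] [LieAlgebra K L]
    (e : Module.Basis ℤ K L)
    (hb : ∀ i j : ℤ, ⁅e i, e j⁆ = ((j - i : ℤ) : K) • e (i + j))
    (Δ : L → L)
    (h2loc : ∀ x y : L, ∃ a : L, Δ x = ⁅a, x⁆ ∧ Δ y = ⁅a, y⁆)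
    (hbasis : ∀ i : ℤ, Δ (e i) = 0) :
    ∀ x : L, Δ x = 0 := by
  -- centralizer lemma: anything commuting with `e n` is a multiple of `e n`
  have hcent : ∀ (a : L) (n : ℤ), ⁅a, e n⁆ = 0 → a = e.repr a n • e n := by
    intro a n h
    have hco : ∀ i : ℤ, i ≠ n → e.repr a i = 0 := by
      intro i hi
      have := witt_repr_lie e hb a n i
      rw [h] at this
      simp only [map_zero, Finsupp.coe_zero, Pi.zero_apply] at this
      have hni : ((n - i : ℤ) : K) ≠ 0 := by
        simp only [ne_eq, Int.cast_eq_zero]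
        omega
      exact (mul_eq_zero.mp this.symm).resolve_left hni
    have hsingle : e.repr a = Finsupp.single n (e.repr a n) := by
      ext i
      by_cases hi : i = n
      · subst hi; rw [Finsupp.single_eq_same]
      · rw [hco i hi, Finsupp.single_eq_of_ne hi]
    conv_lhs => rw [← e.linearCombination_repr a]
    rw [hsingle, Finsupp.linearCombination_single]
    rw [Finsupp.single_eq_same]
  intro x
  by_cases hx : x = 0
  · obtain ⟨a, h1, _⟩ := h2loc x (e 0)
    rw [h1, hx, lie_zero]
  -- top index of the support of x
  have hc : (e.repr x).support.Nonempty := by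
    rw [Finsupp.support_nonempty_iff]
    simpa using hx
  set m := (e.repr x).support.max' hc with hm
  have hxm : e.repr x m ≠ 0 := Finsupp.mem_support_iff.mp ((e.repr x).support.max'_mem hc)
  obtain ⟨a1, ha1x, ha1e⟩ := h2loc x (e (m+1))
  obtain ⟨a2, ha2x, ha2e⟩ := h2loc x (e (m+2))
  rw [hbasis] at ha1e ha2e
  have ha1 := hcent a1 (m+1) ha1e.symm
  have ha2 := hcent a2 (m+2) ha2e.symm
  set t1 := e.repr a1 (m+1)
  set t2 := e.repr a2 (m+2)
  have hd1 : Δ x = t1 • ⁅e (m+1), x⁆ := by rw [ha1x, ha1, smul_lie]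
  have hd2 : Δ x = t2 • ⁅e (m+2), x⁆ := by rw [ha2x, ha2, smul_lie]
  -- coefficient of Δ x at index 2m+2: zero from the first expression
  have key1 : e.repr (Δ x) (2*m + 2) = 0 := by
    rw [hd1, map_smul]
    have hs : ⁅e (m+1), x⁆ = -⁅x, e (m+1)⁆ := (lie_skew _ _).symm
    rw [hs, map_neg]
    have h := witt_repr_lie e hb x (m+1) (m+1)
    have h22 : (m+1) + (m+1) = 2*m+2 := by ring
    rw [h22] at h
    simp [h]
  -- but equal to -2 t2 x_m from the second
  have key2 : e.repr (Δ x) (2*m + 2) = t2 * (-(2 : K)) * e.repr x m := by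
    rw [hd2, map_smul]
    have hs : ⁅e (m+2), x⁆ = -⁅x, e (m+2)⁆ := (lie_skew _ _).symm
    rw [hs, map_neg]
    have h := witt_repr_lie e hb x (m+2) m
    have h22 : m + (m+2) = 2*m+2 := by ring
    rw [h22] at h
    have h2 : ((m + 2 - m : ℤ) : K) = 2 := by push_cast; ring
    rw [h2] at h
    simp only [Finsupp.smul_apply, Finsupp.coe_neg, Pi.neg_apply, h, smul_eq_mul]
    ring
  have ht2 : t2 = 0 := by
    have h0 : t2 * (-(2:K)) * e.repr x m = 0 := by rw [← key2, key1]
    rcases mul_eq_zero.mp h0 with h | h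
    · rcases mul_eq_zero.mp h with h | h
      · exact h
      · norm_num at h
    · exact absurd h hxm
  rw [hd2, ht2, zero_smul]
end

section
/- Every 2-local inner derivation on the Witt algebra W is a derivation; in fact, it is an inner derivation ad(a) for some a ∈ W. -/
lemma witt_bracket_repr {K L : Type*} [Field K] [CharZero K]
    [LieRing L] [LieAlgebra K L]
    (e : Module.Basis ℤ K L)
    (hb : ∀ i j : ℤ, ⁅e i, e j⁆ = ((j - i : ℤ) : K) • e (i + j))
    (k : ℤ) (x : L) (j : ℤ) :
    e.repr ⁅e k, x⁆ j = ((j - 2*k : ℤ) : K) * e.repr x (j - k) := by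
  have hmaps :
      (Finsupp.lapply j ∘ₗ (e.repr : L →ₗ[K] ℤ →₀ K) ∘ₗ (LieAlgebra.ad K L (e k) : L →ₗ[K] L))
        = ((j - 2*k : ℤ) : K) • (Finsupp.lapply (j - k) ∘ₗ (e.repr : L →ₗ[K] ℤ →₀ K)) := by
    apply e.ext
    intro i
    simp only [LinearMap.comp_apply, LinearMap.smul_apply, LieAlgebra.ad_apply,
      Finsupp.lapply_apply, hb k i, map_smul, Finsupp.smul_apply, smul_eq_mul,
      LinearEquiv.coe_coe]
    rw [e.repr_self, e.repr_self, Finsupp.single_apply, Finsupp.single_apply]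
    by_cases h : i = j - k
    · subst h
      rw [if_pos (by omega), if_pos rfl]
      push_cast
      ring
    · rw [if_neg (by omega), if_neg (by omega)]
      simp
  have := LinearMap.congr_fun hmaps x
  simpa using this

lemma witt_centralizer {K L : Type*} [Field K] [CharZero K]
    [LieRing L] [LieAlgebra K L]
    (e : Module.Basis ℤ K L)
    (hb : ∀ i j : ℤ, ⁅e i, e j⁆ = ((j - i : ℤ) : K) • e (i + j))
    (k : ℤ) (b : L) (h : ⁅b, e k⁆ = 0) :
    ∃ t : K, b = t • e k := by
  have h0 : ⁅e k, b⁆ = 0 := by rw [← lie_skew, h, neg_zero]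
  refine ⟨e.repr b k, e.repr.injective ?_⟩
  ext j
  have hj := witt_bracket_repr e hb k b (j + k)
  rw [h0] at hj
  simp only [map_zero, Finsupp.coe_zero, Pi.zero_apply] at hj
  have hj' : ((j + k - 2*k : ℤ) : K) * e.repr b j = 0 := by
    simpa using hj
  rw [map_smul, e.repr_self]
  simp only [Finsupp.smul_apply, Finsupp.single_apply, smul_eq_mul]
  by_cases hjk : j = k
  · subst hjk; simp
  · rw [if_neg (by omega)]
    have : ((j + k - 2*k : ℤ) : K) ≠ 0 := by
      rw [Int.cast_ne_zero]
      omega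
    rw [mul_zero]
    exact (mul_eq_zero.mp hj').resolve_left this

/-- Every 2-local inner derivation on the Witt algebra is an inner derivation
(in particular, a derivation). -/
theorem witt_twoLocal_is_derivation {K L : Type*} [Field K] [CharZero K]
    [LieRing L] [LieAlgebra K L]
    (e : Module.Basis ℤ K L)
    (hb : ∀ i j : ℤ, ⁅e i, e j⁆ = ((j - i : ℤ) : K) • e (i + j))
    (Δ : L → L)
    (h2loc : ∀ x y : L, ∃ a : L, Δ x = ⁅a, x⁆ ∧ Δ y = ⁅a, y⁆) :
    ∃ a : L, ∀ x : L, Δ x = ⁅a, x⁆ := by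
  obtain ⟨a, ha0, ha1⟩ := h2loc (e 0) (e 1)
  have key : ∀ k : ℤ, Δ (e k) = ⁅a, e k⁆ → ∀ x : L,
      ∃ t : K, Δ x - ⁅a, x⁆ = t • ⁅e k, x⁆ := by
    intro k hk x
    obtain ⟨b, hb1, hb2⟩ := h2loc (e k) x
    have hc : ⁅b - a, e k⁆ = 0 := by
      rw [sub_lie, ← hb1, ← hk, sub_self]
    obtain ⟨t, ht⟩ := witt_centralizer e hb k (b - a) hc
    refine ⟨t, ?_⟩
    rw [hb2, ← sub_lie, ht, smul_lie]
  have he2 : Δ (e 2) = ⁅a, e 2⁆ := by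
    obtain ⟨t0, h0⟩ := key 0 ha0 (e 2)
    obtain ⟨t1, h1⟩ := key 1 ha1 (e 2)
    have heq : t0 • ⁅e 0, e 2⁆ = t1 • ⁅e 1, e 2⁆ := h0.symm.trans h1
    have h2 : t0 * ((e.repr ⁅e 0, e 2⁆) 2) = t1 * ((e.repr ⁅e 1, e 2⁆) 2) := by
      have := congrArg (fun z => (e.repr z) 2) heq
      simpa using this
    rw [witt_bracket_repr e hb 0 (e 2) 2, witt_bracket_repr e hb 1 (e 2) 2] at h2
    norm_num [e.repr_self, Finsupp.single_apply] at h2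
    rw [← sub_eq_zero, h0, h2, zero_smul]
  refine ⟨a, fun x => ?_⟩
  obtain ⟨t0, h0⟩ := key 0 ha0 x
  obtain ⟨t1, h1⟩ := key 1 ha1 x
  obtain ⟨t2, h2⟩ := key 2 he2 x
  by_contra hne
  set D := Δ x - ⁅a, x⁆ with hD
  have hDne : D ≠ 0 := fun h => hne (by rwa [sub_eq_zero] at h)
  have hrepr : e.repr D ≠ 0 := fun h => hDne (by
    have := congrArg e.repr.symm h
    simpa using this)
  set d := e.repr D with hd
  have hsupp : d.support.Nonempty := Finsupp.support_nonempty_iff.mpr hrepr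
  set m := d.support.max' hsupp with hmdef
  have hm : d m ≠ 0 := Finsupp.mem_support_iff.mp (d.support.max'_mem hsupp)
  have hm1 : d (m + 1) = 0 := by
    by_contra h
    have := d.support.le_max' _ (Finsupp.mem_support_iff.mpr h)
    omega
  have hm2 : d (m + 2) = 0 := by
    by_contra h
    have := d.support.le_max' _ (Finsupp.mem_support_iff.mpr h)
    omega
  have rel : ∀ k : ℤ, ∀ t : K, D = t • ⁅e k, x⁆ →
      ∀ j : ℤ, d j = t * (((j - 2*k : ℤ)) : K) * e.repr x (j - k) := by
    intro k t h j
    rw [hd, h, map_smul]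
    rw [Finsupp.smul_apply, witt_bracket_repr e hb k x j, smul_eq_mul, mul_assoc]
  have r0 := rel 0 t0 h0
  have r1 := rel 1 t1 h1
  have r2 := rel 2 t2 h2
  -- from d m ≠ 0
  have hcm : e.repr x m ≠ 0 := by
    intro h
    apply hm
    rw [r0 m, show m - 0 = m by ring, h, mul_zero]
  have ht1 : t1 ≠ 0 := by
    intro h
    apply hm
    rw [r1 m, h, zero_mul, zero_mul]
  have ht2 : t2 ≠ 0 := by
    intro h
    apply hm
    rw [r2 m, h, zero_mul, zero_mul]
  -- from d (m+1) = 0 : m = 1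
  have e1 : m = 1 := by
    have := hm1
    rw [r1 (m+1), show m + 1 - 1 = m by ring] at this
    rcases mul_eq_zero.mp this with h | h
    · rcases mul_eq_zero.mp h with h' | h'
      · exact absurd h' ht1
      · have : (m + 1 - 2 * 1 : ℤ) = 0 := by exact_mod_cast h'
        omega
    · exact absurd h hcm
  have e2' : m = 2 := by
    have := hm2
    rw [r2 (m+2), show m + 2 - 2 = m by ring] at this
    rcases mul_eq_zero.mp this with h | h
    · rcases mul_eq_zero.mp h with h' | h'
      · exact absurd h' ht2
      · have : (m + 2 - 2 * 2 : ℤ) = 0 := by exact_mod_cast h'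
        omega
    · exact absurd h hcm
  omega
end

section
/- Let D be a derivation of the positive Witt algebra W⁺ such that D(e_1) = α₁e₁ + α₂e₂ for scalars α₁, α₂. Then α₂ = 0 and D(e_2) = 2α₁e₂ + β₃e₃ for some scalar β₃. -/
private lemma posWitt_aux {K : Type*} [Field K] [CharZero K] (m : ℕ) (hm : m ≠ 3) :
    ((m:K)^3 - 6*(m:K)^2 + 17*(m:K) - 24) ≠ 0 := by
  intro h
  have h0 : ((m:ℤ)^3 - 6*(m:ℤ)^2 + 17*(m:ℤ) - 24) = 0 := by
    have : (((m:ℤ)^3 - 6*(m:ℤ)^2 + 17*(m:ℤ) - 24 : ℤ) : K) = 0 := by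
      push_cast
      linear_combination h
    exact_mod_cast this
  have hfac : (((m:ℤ))-3) * ((m:ℤ)^2 - 3*(m:ℤ) + 8) = 0 := by linear_combination h0
  have hpos : 0 < (m:ℤ)^2 - 3*(m:ℤ) + 8 := by nlinarith [sq_nonneg (2*(m:ℤ)-3)]
  rcases mul_eq_zero.mp hfac with h' | h'
  · omega
  · linarith

/-- If a derivation `D` of the positive Witt algebra satisfies
`D (e 1) = α₁ • e 1 + α₂ • e 2`, then `α₂ = 0` and
`D (e 2) = 2α₁ • e 2 + β₃ • e 3` for some scalar `β₃`. -/
theorem posWitt_derivation_e1_e2 {K L : Type*} [Field K] [CharZero K]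
    [LieRing L] [LieAlgebra K L]
    (e : Module.Basis ℕ+ K L)
    (hb : ∀ i j : ℕ+, ⁅e i, e j⁆ = (((j : ℕ) : K) - ((i : ℕ) : K)) • e (i + j))
    (D : L →ₗ[K] L)
    (hD : ∀ x y : L, D ⁅x, y⁆ = ⁅D x, y⁆ + ⁅x, D y⁆)
    (α₁ α₂ : K) (h1 : D (e 1) = α₁ • e 1 + α₂ • e 2) :
    α₂ = 0 ∧ ∃ β₃ : K, D (e 2) = (2 * α₁) • e 2 + β₃ • e 3 := by
  have hA : ∀ i : ℕ+, ⁅e 1, e i⁆ = (((i:ℕ):K) - 1) • e (i+1) := by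
    intro i; rw [hb]; norm_num [add_comm]
  have hB : ∀ i : ℕ+, ⁅e 2, e i⁆ = (((i:ℕ):K) - 2) • e (i+2) := by
    intro i; rw [hb]; norm_num [add_comm]
  have hC : ∀ i : ℕ+, ⁅e 3, e i⁆ = (((i:ℕ):K) - 3) • e (i+3) := by
    intro i; rw [hb]; norm_num [add_comm]
  -- small-index brackets
  have h12 : ⁅e 1, e 2⁆ = e 3 := by
    have := hA 2; norm_num at this; convert this using 2 <;> decide
  have h13 : ⁅e 1, e 3⁆ = (2:K) • e 4 := by
    have := hA 3; norm_num at this; convert this using 2 <;> rfl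
  have h14 : ⁅e 1, e 4⁆ = (3:K) • e 5 := by
    have := hA 4; norm_num at this; convert this using 2 <;> rfl
  have h15 : ⁅e 1, e 5⁆ = (4:K) • e 6 := by
    have := hA 5; norm_num at this; convert this using 2 <;> rfl
  have h23 : ⁅e 2, e 3⁆ = e 5 := by
    have := hB 3; norm_num at this; convert this using 2 <;> decide
  have h24 : ⁅e 2, e 4⁆ = (2:K) • e 6 := by
    have := hB 4; norm_num at this; convert this using 2 <;> rfl
  -- the auxiliary operator T
  set T : L →ₗ[K] L :=
    { toFun := fun x => ⁅e 1, ⁅e 1, ⁅e 1, x⁆⁆⁆ + (6:K) • ⁅e 3, x⁆ - (6:K) • ⁅e 2, ⁅e 1, x⁆⁆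
      map_add' := by intro x y; simp only [lie_add, smul_add]; abel
      map_smul' := by intro a x; simp only [lie_smul, RingHom.id_apply]; module } with hTdef
  have hTapp : ∀ x : L, T x = ⁅e 1, ⁅e 1, ⁅e 1, x⁆⁆⁆ + (6:K) • ⁅e 3, x⁆ - (6:K) • ⁅e 2, ⁅e 1, x⁆⁆ :=
    fun x => rfl
  have hTi : ∀ i : ℕ+, T (e i) =
      (((i:ℕ):K)^3 - 6*((i:ℕ):K)^2 + 17*((i:ℕ):K) - 24) • e (i+3) := by
    intro i
    have e1 : ((i+1 : ℕ+) : ℕ) = (i:ℕ)+1 := rfl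
    have e2' : ((i+2 : ℕ+) : ℕ) = (i:ℕ)+2 := rfl
    have i1 : (i+1)+1 = i+2 := PNat.coe_injective (by push_cast; ring)
    have i2 : (i+2)+1 = i+3 := PNat.coe_injective (by push_cast; ring)
    have i3 : (i+1)+2 = i+3 := PNat.coe_injective (by push_cast; ring)
    rw [hTapp, hA i, lie_smul, hA (i+1), i1, e1, lie_smul, lie_smul, hA (i+2), i2, e2',
      hC i, lie_smul, hB (i+1), i3, e1]
    push_cast
    match_scalars
    ring
  set f := D (e 2) with hf
  -- derivatives of e 3, e 4, e 5
  have h3 : D (e 3) = α₁ • e 3 + ⁅e 1, f⁆ := by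
    rw [show D (e 3) = D ⁅e 1, e 2⁆ by rw [h12], hD, h1]
    simp only [add_lie, smul_lie, lie_self, smul_zero, add_zero, h12, hf]
  have h4 : (2:K) • D (e 4) = (4*α₁) • e 4 + α₂ • e 5 + ⁅e 1, ⁅e 1, f⁆⁆ := by
    rw [show (2:K) • D (e 4) = D ((2:K) • e 4) from (map_smul D 2 (e 4)).symm, ← h13, hD, h1, h3]
    simp only [add_lie, smul_lie, lie_add, lie_smul, h13, h23]
    module
  have h5a : D (e 5) = ⁅f, e 3⁆ + α₁ • e 5 + ⁅e 2, ⁅e 1, f⁆⁆ := by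
    rw [show D (e 5) = D ⁅e 2, e 3⁆ by rw [h23], hD, h3]
    simp only [lie_add, lie_smul, h23, hf]
    module
  have h5b : (6:K) • D (e 5) = (18*α₁) • e 5 + (8*α₂) • e 6 + ⁅e 1, ⁅e 1, ⁅e 1, f⁆⁆⁆ := by
    have h0 : (3:K) • D (e 5) = ⁅D (e 1), e 4⁆ + ⁅e 1, D (e 4)⁆ := by
      rw [← map_smul, ← h14, hD]
    have h0' : (6:K) • D (e 5) = (2:K) • ⁅D (e 1), e 4⁆ + ⁅e 1, (2:K) • D (e 4)⁆ := by
      rw [lie_smul, ← smul_add, ← h0, smul_smul]; norm_num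
    rw [h0', h4, h1]
    simp only [add_lie, smul_lie, lie_add, lie_smul, h14, h24, h15]
    module
  -- master equation
  have hTf : T f = (-(12*α₁)) • e 5 + (-(8*α₂)) • e 6 := by
    have hA3 : ⁅e 1, ⁅e 1, ⁅e 1, f⁆⁆⁆ = (6:K) • D (e 5) - (18*α₁) • e 5 - (8*α₂) • e 6 := by
      rw [h5b]; abel
    rw [hTapp f, hA3, h5a, ← lie_skew f (e 3)]
    simp only [lie_add, lie_smul, smul_add, smul_sub, smul_neg]
    module
  -- coefficients
  set c := e.repr f with hc
  have hfc : f = c.sum fun i a => a • e i := by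
    conv_lhs => rw [← e.linearCombination_repr f]
    rw [Finsupp.linearCombination_apply]
  clear_value c
  have hTfsum : T f = c.sum fun i a =>
      (a * (((i:ℕ):K)^3 - 6*((i:ℕ):K)^2 + 17*((i:ℕ):K) - 24)) • e (i+3) := by
    conv_lhs => rw [hfc]
    rw [map_finsuppSum]
    refine Finsupp.sum_congr fun i _ => ?_
    rw [map_smul, hTi, smul_smul]
  have hcoeff : ∀ k : ℕ+,
      c k * (((k:ℕ):K)^3 - 6*((k:ℕ):K)^2 + 17*((k:ℕ):K) - 24) = e.repr (T f) (k+3) := by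
    intro k
    rw [hTfsum, map_finsuppSum, Finsupp.sum_apply, Finsupp.sum_eq_single k]
    · simp [Module.Basis.repr_self]
    · intro b hb0 hbk
      have hne : b + 3 ≠ k + 3 := fun h => hbk (by
        apply PNat.coe_injective
        have := congrArg (fun t : ℕ+ => (t:ℕ)) h
        simpa using this)
      simp [Module.Basis.repr_self, Finsupp.single_apply, hne]
    · intro _; simp
  have hrhs : ∀ k : ℕ+, e.repr (T f) (k+3) =
      (-(12*α₁)) * (if (5:ℕ+) = k+3 then 1 else 0)
        + (-(8*α₂)) * (if (6:ℕ+) = k+3 then 1 else 0) := by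
    intro k
    rw [hTf]
    simp only [map_add, map_smul, Module.Basis.repr_self, Finsupp.coe_add, Finsupp.coe_smul,
      Pi.add_apply, Pi.smul_apply, Finsupp.single_apply, smul_eq_mul]
  have key : ∀ k : ℕ+, c k * (((k:ℕ):K)^3 - 6*((k:ℕ):K)^2 + 17*((k:ℕ):K) - 24) =
      (-(12*α₁)) * (if (5:ℕ+) = k+3 then 1 else 0)
        + (-(8*α₂)) * (if (6:ℕ+) = k+3 then 1 else 0) := fun k => (hcoeff k).trans (hrhs k)
  have ha2 : α₂ = 0 := by
    have := key 3
    rw [if_neg (by decide), if_pos (by decide)] at this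
    norm_num at this
    exact this
  have hc2 : c 2 = 2 * α₁ := by
    have := key 2
    rw [if_pos (by decide), if_neg (by decide)] at this
    norm_num at this
    linear_combination this / 6
  have hzero : ∀ k : ℕ+, k ≠ 2 → k ≠ 3 → c k = 0 := by
    intro k hk2 hk3
    have hthis := key k
    rw [if_neg (fun h => hk2 (by
        apply PNat.coe_injective
        have := congrArg (fun t : ℕ+ => (t:ℕ)) h
        simpa using this.symm)),
      if_neg (fun h => hk3 (by
        apply PNat.coe_injective
        have := congrArg (fun t : ℕ+ => (t:ℕ)) h
        simpa using this.symm))] at hthis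
    simp only [mul_zero, add_zero, zero_add] at hthis
    have hn3 : (k:ℕ) ≠ 3 := fun hh => hk3 (PNat.coe_injective hh)
    have hP := posWitt_aux (K := K) (k:ℕ) hn3
    rcases mul_eq_zero.mp hthis with h | h
    · exact h
    · exact absurd h hP
  refine ⟨ha2, c 3, ?_⟩
  apply e.repr.injective
  rw [← hc]
  ext k
  rw [map_add, map_smul, map_smul, Module.Basis.repr_self, Module.Basis.repr_self]
  rcases eq_or_ne k 2 with rfl | hk2
  · simp [Finsupp.single_apply, show (3:ℕ+) ≠ 2 by decide, hc2]
  · rcases eq_or_ne k 3 with rfl | hk3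
    · simp [Finsupp.single_apply, show (2:ℕ+) ≠ 3 by decide]
    · simp [Finsupp.single_apply, Ne.symm hk2, Ne.symm hk3, hzero k hk2 hk3]
end

section
/- Let D be a derivation of the positive Witt algebra W⁺ with D(e_1) = 0 and D(e_2) = β₃e₃. Then D(e_k) = (k-1)β₃e_{k+1} for all k ≥ 2, i.e., D = ad(β₃e₁) restricted to W⁺ (with the convention that ad(β₃e₁)(e₁) = 0 is consistent). -/
/-- If a derivation `D` of the positive Witt algebra satisfies `D (e 1) = 0` and
`D (e 2) = β₃ • e 3`, then `D (e k) = (k-1) β₃ • e (k+1)` for all `k ≥ 2`,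
i.e. `D` agrees with `ad (β₃ • e 1)` on `W⁺`. -/
theorem posWitt_derivation_ad_e1 {K L : Type*} [Field K] [CharZero K]
    [LieRing L] [LieAlgebra K L]
    (e : Module.Basis ℕ+ K L)
    (hb : ∀ i j : ℕ+, ⁅e i, e j⁆ = (((j : ℕ) : K) - ((i : ℕ) : K)) • e (i + j))
    (D : L →ₗ[K] L)
    (hD : ∀ x y : L, D ⁅x, y⁆ = ⁅D x, y⁆ + ⁅x, D y⁆)
    (h1 : D (e 1) = 0) (β₃ : K) (h2 : D (e 2) = β₃ • e 3) :
    ∀ k : ℕ+, 2 ≤ k → D (e k) = (((k : ℕ) : K) - 1) • (β₃ • e (k + 1)) := by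
  intro k hk
  induction k using PNat.recOn with
  | one => exact absurd hk (by decide)
  | succ k ih =>
    rcases eq_or_ne k 1 with rfl | hk1
    · have e2 : ((1 : ℕ+) + 1) = 2 := rfl
      have e3 : ((2 : ℕ+) + 1) = 3 := rfl
      rw [e2, e3, h2]
      norm_num [show ((2 : ℕ+) : ℕ) = 2 from rfl]
    · have hk2 : 2 ≤ k := lt_of_le_of_ne k.one_le (Ne.symm hk1)
      have ihk := ih hk2
      have hbr := hb 1 k
      have happ := hD (e 1) (e k)
      rw [hbr, map_smul, h1, zero_lie, zero_add, ihk, lie_smul, lie_smul, hb 1 (k + 1)] at happ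
      have hkK : (((k : ℕ) : K) - 1) ≠ 0 := by
        have hk2' : (2 : ℕ) ≤ (k : ℕ) := hk2
        intro h
        have hc : ((k : ℕ) : K) = 1 := sub_eq_zero.mp h
        have : (k : ℕ) = 1 := by exact_mod_cast hc
        omega
      have h1k : (1 : ℕ+) + k = k + 1 := add_comm 1 k
      have hkk : (1 : ℕ+) + (k + 1) = k + 1 + 1 := add_comm 1 (k + 1)
      simp only [PNat.one_coe, Nat.cast_one, h1k, hkk] at happ
      have key : (((k : ℕ) : K) - 1) • D (e (k + 1)) =
          (((k : ℕ) : K) - 1) • ((((k + 1 : ℕ+) : ℕ) : K) - 1) • (β₃ • e (k + 1 + 1)) := by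
        rw [happ]
        push_cast
        rw [smul_smul, smul_smul, smul_smul, smul_smul]
        ring_nf
      exact smul_right_injective L hkK key
end

section
/- Let Δ be a 2-local derivation on the positive Witt algebra W⁺ (for every pair x,y there is a derivation D_{x,y} agreeing with Δ at x and y) such that Δ(e_1) = Δ(e_2) = 0. Then Δ(e_j) = 0 for all j ≥ 1. -/
set_option linter.unusedSectionVars false


lemma keyKer {K L : Type*} [Field K] [CharZero K] [LieRing L] [LieAlgebra K L]
    (e : Module.Basis ℕ+ K L) (T : L →ₗ[K] L) (s : ℕ+) (p : ℕ+ → K)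
    (hT : ∀ k, T (e k) = p k • e (k + s))
    (hp : ∀ k, k ≠ 3 → p k ≠ 0)
    (w : L) (hw : T w = 0) : ∃ α : K, w = α • e 3 := by
  set c := e.repr w with hc
  have hrepr : ∀ m : ℕ+, c m * p m = 0 := by
    intro m
    have h0 : e.repr (T w) = 0 := by rw [hw, map_zero]
    have hTw : T w = c.sum fun k a => (a * p k) • e (k + s) := by
      conv_lhs => rw [← e.linearCombination_repr w]
      rw [Finsupp.linearCombination_apply, Finsupp.sum, map_sum, Finsupp.sum]
      refine Finset.sum_congr rfl fun k _ => ?_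
      rw [map_smul, hT, smul_smul]
    have h1 : e.repr (T w) (m + s) = c m * p m := by
      rw [hTw, Finsupp.sum, map_sum, Finset.sum_apply']
      have hterm : ∀ k ∈ c.support,
          (e.repr ((c k * p k) • e (k + s))) (m + s) = if k = m then c k * p k else 0 := by
        intro k _
        rw [map_smul, e.repr_self, Finsupp.smul_single, smul_eq_mul, mul_one,
          Finsupp.single_apply]
        by_cases hkm : k = m
        · simp [hkm]
        · rw [if_neg (fun hc => hkm (add_right_cancel hc)), if_neg hkm]
      rw [Finset.sum_congr rfl hterm, Finset.sum_ite_eq' c.support m (fun k => c k * p k)]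
      by_cases hm : m ∈ c.support
      · rw [if_pos hm]
      · rw [if_neg hm, Finsupp.notMem_support_iff.1 hm, zero_mul]
    rw [h0] at h1
    simpa using h1.symm
  have hcm : ∀ m : ℕ+, m ≠ 3 → c m = 0 := fun m hm => by
    rcases mul_eq_zero.1 (hrepr m) with h | h
    · exact h
    · exact absurd h (hp m hm)
  refine ⟨c 3, ?_⟩
  apply e.repr.injective
  rw [map_smul, e.repr_self]
  ext a
  by_cases ha : a = 3
  · subst ha; simp [← hc]
  · simp [Finsupp.single_apply, Ne.symm ha, ← hc, hcm a ha]


section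
variable {K L : Type*} [Field K] [CharZero K] [LieRing L] [LieAlgebra K L]

lemma cast_ne_pnat {K : Type*} [Field K] [CharZero K] {n m : ℕ+} (h : n ≠ m) :
    ((n:ℕ):K) ≠ ((m:ℕ):K) :=
  fun hc => h (PNat.coe_inj.1 (Nat.cast_injective hc))

lemma lemD1 (e : Module.Basis ℕ+ K L)
    (hb : ∀ i j : ℕ+, ⁅e i, e j⁆ = (((j : ℕ) : K) - ((i : ℕ) : K)) • e (i + j))
    (D : L →ₗ[K] L)
    (hder : ∀ u v : L, D ⁅u, v⁆ = ⁅D u, v⁆ + ⁅u, D v⁆)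
    (hD1 : D (e 1) = 0) :
    ∃ α : K, ∀ n : ℕ+, D (e n) = ((((n:ℕ):K) - 1) * α) • e (n + 1) := by
  have hb12 : ⁅e 1, e 2⁆ = e 3 := by
    rw [hb, show (1+2:ℕ+) = 3 from by decide]; norm_num
  have hb13 : ⁅e 1, e 3⁆ = (2:K) • e 4 := by
    rw [hb, show (1+3:ℕ+) = 4 from by decide]; norm_num
  have hb14 : ⁅e 1, e 4⁆ = (3:K) • e 5 := by
    rw [hb, show (1+4:ℕ+) = 5 from by decide]; norm_num
  have hb23 : ⁅e 2, e 3⁆ = e 5 := by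
    rw [hb, show (2+3:ℕ+) = 5 from by decide]; norm_num
  set w := D (e 2) with hw
  -- derive values
  have h3 : D (e 3) = ⁅e 1, w⁆ := by
    rw [← hb12, hder, hD1, zero_lie, zero_add]
  have h4 : (2:K) • D (e 4) = ⁅e 1, ⁅e 1, w⁆⁆ := by
    rw [← map_smul, ← hb13, hder, hD1, zero_lie, zero_add, h3]
  have h5a : (3:K) • D (e 5) = ⁅e 1, D (e 4)⁆ := by
    rw [← map_smul, ← hb14, hder, hD1, zero_lie, zero_add]
  have h5b : D (e 5) = ⁅w, e 3⁆ + ⁅e 2, ⁅e 1, w⁆⁆ := by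
    rw [← hb23, hder, h3]
  have key : ⁅e 1, ⁅e 1, ⁅e 1, w⁆⁆⁆ = (6:K) • (⁅w, e 3⁆ + ⁅e 2, ⁅e 1, w⁆⁆) := by
    rw [← h5b]
    calc ⁅e 1, ⁅e 1, ⁅e 1, w⁆⁆⁆ = ⁅e 1, (2:K) • D (e 4)⁆ := by rw [h4]
      _ = (2:K) • ⁅e 1, D (e 4)⁆ := by rw [lie_smul]
      _ = (2:K) • ((3:K) • D (e 5)) := by rw [h5a]
      _ = (6:K) • D (e 5) := by rw [smul_smul]; norm_num
  -- the linear operator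
  set ad : L → Module.End K L := fun x => LieAlgebra.ad K L x with had
  set T : L →ₗ[K] L :=
    (ad (e 1)) ∘ₗ (ad (e 1)) ∘ₗ (ad (e 1))
      - (6:K) • (-(ad (e 3)) + (ad (e 2)) ∘ₗ (ad (e 1))) with hT
  have hTk : ∀ k : ℕ+,
      T (e k) = (((k:ℕ):K)^3 - 6*((k:ℕ):K)^2 + 17*((k:ℕ):K) - 24) • e (k + 3) := by
    intro k
    have i1 : (1 + k : ℕ+) = k + 1 := add_comm 1 k
    have i2 : (1 + (k+1) : ℕ+) = k + 2 := by rw [← PNat.coe_inj]; push_cast; omega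
    have i3 : (1 + (k+2) : ℕ+) = k + 3 := by rw [← PNat.coe_inj]; push_cast; omega
    have i4 : (3 + k : ℕ+) = k + 3 := add_comm 3 k
    have i5 : (2 + (k+1) : ℕ+) = k + 3 := by rw [← PNat.coe_inj]; push_cast; omega
    simp only [hT, had, LinearMap.sub_apply, LinearMap.comp_apply, LinearMap.smul_apply,
      LinearMap.add_apply, LinearMap.neg_apply, LieAlgebra.ad_apply]
    simp only [hb, lie_smul, smul_smul, i1, i2, i3, i4, i5]
    push_cast
    module
  have hp : ∀ k : ℕ+, k ≠ 3 →
      (((k:ℕ):K)^3 - 6*((k:ℕ):K)^2 + 17*((k:ℕ):K) - 24) ≠ 0 := by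
    intro k h
    have e1 : (((k:ℕ):K) - 3) ≠ 0 := by
      rw [sub_ne_zero]
      intro hc
      have h1 : (k:ℕ) = 3 := by exact_mod_cast hc
      exact h (by rw [← PNat.coe_inj, h1]; rfl)
    have e2 : ((k:ℕ):K)^2 - 3*((k:ℕ):K) + 8 ≠ 0 := by
      have hne : (k:ℕ)^2 + 8 ≠ 3 * (k:ℕ) := by nlinarith [k.property]
      have h8 : (((k:ℕ)^2 + 8 : ℕ) : K) ≠ (((3 * (k:ℕ) : ℕ)) : K) :=
        fun hc => hne (Nat.cast_injective hc)
      intro hc; apply h8; push_cast; linear_combination hc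
    intro hc
    exact mul_ne_zero e1 e2 (by linear_combination hc)
  have hTw : T w = 0 := by
    have hskew : -⁅e 3, w⁆ = ⁅w, e 3⁆ := lie_skew w (e 3)
    simp only [hT, had, LinearMap.sub_apply, LinearMap.comp_apply, LinearMap.smul_apply,
      LinearMap.add_apply, LinearMap.neg_apply, LieAlgebra.ad_apply]
    rw [sub_eq_zero, key]
    congr 1
    rw [← hskew]
  obtain ⟨α, hα⟩ := keyKer e T 3 _ hTk hp w hTw
  refine ⟨α, ?_⟩
  intro n
  induction n using PNat.recOn with
  | one =>
    rw [hD1, show (((1:ℕ+):ℕ):K) = 1 by norm_num]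
    rw [sub_self, zero_mul, zero_smul]
  | succ n ih =>
    by_cases hn : n = 1
    · subst hn
      rw [show ((1:ℕ+)+1) = 2 from by decide, ← hw, hα,
        show ((2:ℕ+)+1) = 3 from by decide]
      norm_num
    · have hne : (((n:ℕ):K) - 1) ≠ 0 := by
        rw [sub_ne_zero]
        intro hc
        have h1 : (n:ℕ) = 1 := by exact_mod_cast hc
        exact hn (by rw [← PNat.coe_inj, h1]; rfl)
      have hstep := hder (e 1) (e n)
      rw [hD1, zero_lie, zero_add, hb 1 n, map_smul, ih, lie_smul,
        hb 1 (n+1)] at hstep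
      have i1 : ((1:ℕ+) + n) = n + 1 := add_comm 1 n
      have i2 : ((1:ℕ+) + (n+1)) = n + 1 + 1 := by rw [← PNat.coe_inj]; push_cast; omega
      rw [i1, i2] at hstep
      have hcast : ((((n+1:ℕ+):ℕ)):K) = ((n:ℕ):K) + 1 := by push_cast; ring
      push_cast at hstep
      refine smul_right_injective L hne ?_
      show (((n:ℕ):K) - 1) • D (e (n+1))
        = (((n:ℕ):K) - 1) • (((((n+1:ℕ+):ℕ):K) - 1) * α) • e (n+1+1)
      rw [hstep, hcast]
      module

lemma lemD2 (e : Module.Basis ℕ+ K L)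
    (hb : ∀ i j : ℕ+, ⁅e i, e j⁆ = (((j : ℕ) : K) - ((i : ℕ) : K)) • e (i + j))
    (D : L →ₗ[K] L)
    (hder : ∀ u v : L, D ⁅u, v⁆ = ⁅D u, v⁆ + ⁅u, D v⁆)
    (hD2 : D (e 2) = 0) :
    ∃ β : K, ∀ n : ℕ+, D (e n) = (((2:K) - ((n:ℕ):K)) * β) • e (n + 2) := by
  have hb12 : ⁅e 1, e 2⁆ = e 3 := by
    rw [hb, show (1+2:ℕ+) = 3 from by decide]; norm_num
  have hb13 : ⁅e 1, e 3⁆ = (2:K) • e 4 := by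
    rw [hb, show (1+3:ℕ+) = 4 from by decide]; norm_num
  have hb14 : ⁅e 1, e 4⁆ = (3:K) • e 5 := by
    rw [hb, show (1+4:ℕ+) = 5 from by decide]; norm_num
  have hb23 : ⁅e 2, e 3⁆ = e 5 := by
    rw [hb, show (2+3:ℕ+) = 5 from by decide]; norm_num
  set u := D (e 1) with hu
  have h3 : D (e 3) = ⁅u, e 2⁆ := by
    rw [← hb12, hder, hD2, lie_zero, add_zero]
  have h4 : (2:K) • D (e 4) = ⁅u, e 3⁆ + ⁅e 1, ⁅u, e 2⁆⁆ := by
    rw [← map_smul, ← hb13, hder, h3]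
  have h5b : D (e 5) = ⁅e 2, ⁅u, e 2⁆⁆ := by
    rw [← hb23, hder, hD2, zero_lie, zero_add, h3]
  have h5a : (3:K) • D (e 5) = ⁅u, e 4⁆ + ⁅e 1, D (e 4)⁆ := by
    rw [← map_smul, ← hb14, hder]
  have key : (6:K) • ⁅e 2, ⁅u, e 2⁆⁆
      = (2:K) • ⁅u, e 4⁆ + ⁅e 1, ⁅u, e 3⁆ + ⁅e 1, ⁅u, e 2⁆⁆⁆ := by
    calc (6:K) • ⁅e 2, ⁅u, e 2⁆⁆ = (2:K) • ((3:K) • D (e 5)) := by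
          rw [h5b, smul_smul]; norm_num
      _ = (2:K) • ⁅u, e 4⁆ + (2:K) • ⁅e 1, D (e 4)⁆ := by rw [h5a, smul_add]
      _ = (2:K) • ⁅u, e 4⁆ + ⁅e 1, (2:K) • D (e 4)⁆ := by rw [lie_smul]
      _ = (2:K) • ⁅u, e 4⁆ + ⁅e 1, ⁅u, e 3⁆ + ⁅e 1, ⁅u, e 2⁆⁆⁆ := by rw [h4]
  set ad : L → Module.End K L := fun x => LieAlgebra.ad K L x with had
  set T : L →ₗ[K] L :=
    (6:K) • ((ad (e 2)) ∘ₗ (-(ad (e 2))))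
      - ((2:K) • (-(ad (e 4))) + (ad (e 1)) ∘ₗ ((-(ad (e 3))) + (ad (e 1)) ∘ₗ (-(ad (e 2)))))
    with hT
  have hTk : ∀ k : ℕ+,
      T (e k) = (((k:ℕ):K)^3 - 4*((k:ℕ):K)^2 + 9*((k:ℕ):K) - 18) • e (k + 4) := by
    intro k
    have i1 : (2 + k : ℕ+) = k + 2 := add_comm 2 k
    have i2 : (2 + (k+2) : ℕ+) = k + 4 := by rw [← PNat.coe_inj]; push_cast; omega
    have i3 : (4 + k : ℕ+) = k + 4 := add_comm 4 k
    have i4 : (3 + k : ℕ+) = k + 3 := add_comm 3 k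
    have i5 : (1 + (k+3) : ℕ+) = k + 4 := by rw [← PNat.coe_inj]; push_cast; omega
    have i6 : (1 + (k+2) : ℕ+) = k + 3 := by rw [← PNat.coe_inj]; push_cast; omega
    simp only [hT, had, LinearMap.sub_apply, LinearMap.comp_apply, LinearMap.smul_apply,
      LinearMap.add_apply, LinearMap.neg_apply, LieAlgebra.ad_apply, lie_neg, neg_neg,
      lie_add, hb, lie_smul, smul_smul, smul_neg, neg_smul, i1, i2, i3, i4, i5, i6]
    push_cast
    module
  have hp : ∀ k : ℕ+, k ≠ 3 →
      (((k:ℕ):K)^3 - 4*((k:ℕ):K)^2 + 9*((k:ℕ):K) - 18) ≠ 0 := by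
    intro k h
    have e1 : (((k:ℕ):K) - 3) ≠ 0 := by
      rw [sub_ne_zero]
      intro hc
      have h1 : (k:ℕ) = 3 := by exact_mod_cast hc
      exact h (by rw [← PNat.coe_inj, h1]; rfl)
    have e2 : ((k:ℕ):K)^2 - ((k:ℕ):K) + 6 ≠ 0 := by
      have hne : (k:ℕ)^2 + 6 ≠ (k:ℕ) := by nlinarith [k.property]
      have h8 : (((k:ℕ)^2 + 6 : ℕ) : K) ≠ (((k:ℕ) : ℕ) : K) :=
        fun hc => hne (Nat.cast_injective hc)
      intro hc; apply h8; push_cast; linear_combination hc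
    intro hc
    exact mul_ne_zero e1 e2 (by linear_combination hc)
  have hTw : T u = 0 := by
    have s2 : -⁅e 2, u⁆ = ⁅u, e 2⁆ := lie_skew u (e 2)
    have s3 : -⁅e 3, u⁆ = ⁅u, e 3⁆ := lie_skew u (e 3)
    have s4 : -⁅e 4, u⁆ = ⁅u, e 4⁆ := lie_skew u (e 4)
    have key2 : (6:K) • ⁅e 2, -⁅e 2, u⁆⁆
        - ((2:K) • -⁅e 4, u⁆ + ⁅e 1, -⁅e 3, u⁆ + ⁅e 1, -⁅e 2, u⁆⁆⁆) = 0 := by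
      rw [s2, s3, s4, sub_eq_zero, key]
    simpa only [hT, had, LinearMap.sub_apply, LinearMap.comp_apply, LinearMap.smul_apply,
      LinearMap.add_apply, LinearMap.neg_apply, LieAlgebra.ad_apply] using key2
  obtain ⟨β, hβ⟩ := keyKer e T 4 _ hTk hp u hTw
  refine ⟨β, ?_⟩
  intro n
  induction n using PNat.recOn with
  | one =>
    rw [← hu, hβ, show ((1:ℕ+)+2) = 3 from by decide]
    norm_num
  | succ n ih =>
    by_cases hn : n = 1
    · subst hn
      rw [show ((1:ℕ+)+1) = 2 from by decide, hD2]
      norm_num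
    · have hne : (((n:ℕ):K) - 1) ≠ 0 := by
        rw [sub_ne_zero]
        intro hc
        have h1 : (n:ℕ) = 1 := by exact_mod_cast hc
        exact hn (by rw [← PNat.coe_inj, h1]; rfl)
      have hstep := hder (e 1) (e n)
      rw [← hu, hβ, hb 1 n, map_smul, ih, lie_smul, hb 1 (n+2)] at hstep
      have i1 : ((1:ℕ+) + n) = n + 1 := add_comm 1 n
      have i2 : ((1:ℕ+) + (n+2)) = n + 3 := by rw [← PNat.coe_inj]; push_cast; omega
      have i3 : ((n:ℕ+) + 1 + 2) = n + 3 := by rw [← PNat.coe_inj]; push_cast; omega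
      have hb3n : ⁅e 3, e n⁆ = (((n:ℕ):K) - 3) • e (n + 3) := by
        rw [hb, add_comm 3 n]; norm_num
      rw [i1, i2, smul_lie, hb3n] at hstep
      push_cast at hstep
      refine smul_right_injective L hne ?_
      show (((n:ℕ):K) - 1) • D (e (n+1))
        = (((n:ℕ):K) - 1) • (((2:K) - ((((n+1:ℕ+):ℕ)):K)) * β) • e (n+1+2)
      have hcast : ((((n+1:ℕ+):ℕ)):K) = ((n:ℕ):K) + 1 := by push_cast; ring
      rw [hstep, hcast, i3]
      module

end


/-- A 2-local derivation `Δ` on the positive Witt algebra with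
`Δ (e 1) = Δ (e 2) = 0` vanishes on all basis elements. -/
theorem posWitt_twoLocal_vanishing_on_basis {K L : Type*} [Field K] [CharZero K]
    [LieRing L] [LieAlgebra K L]
    (e : Module.Basis ℕ+ K L)
    (hb : ∀ i j : ℕ+, ⁅e i, e j⁆ = (((j : ℕ) : K) - ((i : ℕ) : K)) • e (i + j))
    (Δ : L → L)
    (h2loc : ∀ x y : L, ∃ D : L →ₗ[K] L,
      (∀ u v : L, D ⁅u, v⁆ = ⁅D u, v⁆ + ⁅u, D v⁆) ∧ Δ x = D x ∧ Δ y = D y)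
    (h1 : Δ (e 1) = 0) (h2 : Δ (e 2) = 0) :
    ∀ j : ℕ+, Δ (e j) = 0 := by
  intro j
  obtain ⟨D1, hder1, hx1, hxj1⟩ := h2loc (e 1) (e j)
  obtain ⟨D2, hder2, hx2, hxj2⟩ := h2loc (e 2) (e j)
  obtain ⟨α, hA⟩ := lemD1 e hb D1 hder1 (by rw [← hx1, h1])
  obtain ⟨β, hB⟩ := lemD2 e hb D2 hder2 (by rw [← hx2, h2])
  have E1 : Δ (e j) = ((((j:ℕ):K) - 1) * α) • e (j + 1) := by rw [hxj1, hA j]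
  have E2 : Δ (e j) = (((2:K) - ((j:ℕ):K)) * β) • e (j + 2) := by rw [hxj2, hB j]
  have hne12 : (j + 2 : ℕ+) ≠ j + 1 := by
    intro hc; rw [← PNat.coe_inj] at hc; push_cast at hc; omega
  have hco : (((j:ℕ):K) - 1) * α = 0 := by
    have h' := congrArg (fun x => e.repr x (j + 1)) (E1.symm.trans E2)
    simp only [map_smul, Module.Basis.repr_self, Finsupp.smul_single, smul_eq_mul, mul_one,
      Finsupp.single_apply, if_pos rfl, if_neg hne12] at h'
    exact h'
  rw [E1, hco, zero_smul]
end

section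
/- Every 2-local derivation on the positive Witt algebra W⁺ is a derivation. -/
set_option linter.unusedSectionVars false
set_option maxHeartbeats 1000000

section
variable {K L : Type*} [Field K] [CharZero K] [LieRing L] [LieAlgebra K L]


lemma repr_lie (e : Module.Basis ℕ+ K L)
    (hb : ∀ i j : ℕ+, ⁅e i, e j⁆ = (((j : ℕ) : K) - ((i : ℕ) : K)) • e (i + j))
    (a k : ℕ+) (x : L) :
    e.repr ⁅e a, x⁆ (k + a) = (((k : ℕ) : K) - ((a : ℕ) : K)) * e.repr x k := by
  have h : (Finsupp.lapply (k+a) : (ℕ+ →₀ K) →ₗ[K] K) ∘ₗ (e.repr : L →ₗ[K] (ℕ+ →₀ K)) ∘ₗ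
      (LieAlgebra.ad K L (e a))
      = (((k : ℕ) : K) - ((a : ℕ) : K)) • ((Finsupp.lapply k : (ℕ+ →₀ K) →ₗ[K] K) ∘ₗ
        (e.repr : L →ₗ[K] (ℕ+ →₀ K))) := by
    apply e.ext
    intro j
    simp only [LinearMap.coe_comp, Function.comp_apply, LieAlgebra.ad_apply, hb,
      LinearMap.smul_apply, map_smul, Finsupp.smul_apply,
      LinearEquiv.coe_coe, Module.Basis.repr_self_apply, Finsupp.lapply_apply, smul_eq_mul]
    rcases eq_or_ne j k with rfl | hjk
    · rw [if_pos (add_comm a j), if_pos rfl]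
    · rw [if_neg (fun h => hjk (by rw [add_comm] at h; exact add_right_cancel h)),
        if_neg hjk]; ring
  have := LinearMap.congr_fun h x
  simpa using this

lemma repr_lie_low (e : Module.Basis ℕ+ K L)
    (hb : ∀ i j : ℕ+, ⁅e i, e j⁆ = (((j : ℕ) : K) - ((i : ℕ) : K)) • e (i + j))
    (a m : ℕ+) (hm : m ≤ a) (x : L) :
    e.repr ⁅e a, x⁆ m = 0 := by
  have h : (Finsupp.lapply m : (ℕ+ →₀ K) →ₗ[K] K) ∘ₗ (e.repr : L →ₗ[K] (ℕ+ →₀ K)) ∘ₗ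
      (LieAlgebra.ad K L (e a)) = 0 := by
    apply e.ext
    intro j
    simp only [LinearMap.coe_comp, Function.comp_apply, LieAlgebra.ad_apply, hb,
      map_smul, Finsupp.smul_apply, LinearEquiv.coe_coe, Module.Basis.repr_self_apply, Finsupp.lapply_apply,
      smul_eq_mul, LinearMap.zero_apply]
    rw [if_neg, mul_zero]
    intro h
    have : m < a + j := lt_of_le_of_lt hm (PNat.lt_add_right a j)
    rw [h] at this
    exact lt_irrefl _ this
  have := LinearMap.congr_fun h x
  simpa using this

lemma wittDerivZero (e : Module.Basis ℕ+ K L)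
    (hb : ∀ i j : ℕ+, ⁅e i, e j⁆ = (((j : ℕ) : K) - ((i : ℕ) : K)) • e (i + j))
    (D : L →ₗ[K] L) (hleib : ∀ u v : L, D ⁅u, v⁆ = ⁅D u, v⁆ + ⁅u, D v⁆)
    (h1 : D (e 1) = 0) (h2 : D (e 2) = 0) : ∀ x : L, D x = 0 := by
  have key : ∀ n : ℕ, ∀ p : ℕ+, (p : ℕ) ≤ n + 2 → D (e p) = 0 := by
    intro n
    induction n with
    | zero =>
      intro p hp
      have hpos := p.pos
      have : p = 1 ∨ p = 2 := by
        rcases Nat.lt_or_ge (p:ℕ) 2 with h | h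
        · left; apply PNat.coe_injective; rw [PNat.one_coe]; omega
        · right; apply PNat.coe_injective; rw [PNat.val_ofNat]; omega
      rcases this with rfl | rfl
      · exact h1
      · exact h2
    | succ n ih =>
      intro p hp
      by_cases h : (p : ℕ) ≤ n + 2
      · exact ih p h
      · have hp3 : (p : ℕ) = n + 3 := by omega
        set q : ℕ+ := ⟨n + 2, by omega⟩ with hq
        have hqc : (q : ℕ) = n + 2 := rfl
        have hqp : 1 + q = p := by
          apply PNat.coe_injective; rw [PNat.add_coe, PNat.one_coe, hqc, hp3]; omega
        have hbq := hb 1 q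
        rw [hqp] at hbq
        have hD : D ⁅e 1, e q⁆ = 0 := by
          rw [hleib, h1, ih q (by rw [hqc]), zero_lie, lie_zero, add_zero]
        rw [hbq, map_smul] at hD
        have hc : (((q : ℕ) : K) - (((1:ℕ+) : ℕ) : K)) ≠ 0 := by
          rw [hqc, PNat.one_coe]
          push_cast
          intro hcc
          have h0 : ((n + 1 : ℕ) : K) = 0 := by push_cast; linear_combination hcc
          exact absurd (Nat.cast_eq_zero.mp h0) (by omega)
        exact (smul_eq_zero.mp hD).resolve_left hc
  intro x
  have hD0 : D = (0 : L →ₗ[K] L) := e.ext fun p => by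
    simpa using key (p : ℕ) p (by omega)
  rw [hD0]; rfl

-- helper: v concentrated at t
lemma eq_single_basis (e : Module.Basis ℕ+ K L) (v : L) (t : ℕ+)
    (h : ∀ k : ℕ+, k ≠ t → e.repr v k = 0) : v = e.repr v t • e t := by
  apply e.repr.injective
  rw [map_smul, Module.Basis.repr_self]
  ext m
  rcases eq_or_ne m t with rfl | hm
  · simp [Finsupp.single_apply]
  · rw [Finsupp.smul_apply, Finsupp.single_apply, if_neg (fun hh : t = m => hm hh.symm), h m hm, smul_zero]

lemma lemB (e : Module.Basis ℕ+ K L)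
    (hb : ∀ i j : ℕ+, ⁅e i, e j⁆ = (((j : ℕ) : K) - ((i : ℕ) : K)) • e (i + j))
    (D : L →ₗ[K] L) (hleib : ∀ u v : L, D ⁅u, v⁆ = ⁅D u, v⁆ + ⁅u, D v⁆)
    (h1 : D (e 1) = 0) :
    ∃ c : K, ∀ x : L, D x = c • ⁅e 1, x⁆ := by
  set v := D (e 2) with hv
  -- e 3 = ⁅e 1, e 2⁆
  have he3 : ⁅e 1, e 2⁆ = e 3 := by
    rw [hb]; norm_num [show (1+2:ℕ+) = 3 from rfl, PNat.val_ofNat, PNat.one_coe]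
  have hD3 : D (e 3) = ⁅e 1, v⁆ := by
    rw [← he3, hleib, h1, zero_lie, zero_add]
  -- 2 • D e4 = [e1,[e1,v]]
  have hD4 : (2:K) • D (e 4) = ⁅e 1, ⁅e 1, v⁆⁆ := by
    have h2 : D ⁅e 1, e 3⁆ = ⁅e 1, ⁅e 1, v⁆⁆ := by
      rw [hleib, h1, hD3, zero_lie, zero_add]
    rw [hb] at h2
    rw [map_smul] at h2
    norm_num [show (1+3:ℕ+) = 4 from rfl, PNat.val_ofNat, PNat.one_coe] at h2
    exact h2
  -- 3 • D e5 = [e1, D e4]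
  have hD5b : (3:K) • D (e 5) = ⁅e 1, D (e 4)⁆ := by
    have h2 : D ⁅e 1, e 4⁆ = ⁅e 1, D (e 4)⁆ := by
      rw [hleib, h1, zero_lie, zero_add]
    rw [hb, map_smul] at h2
    norm_num [show (1+4:ℕ+) = 5 from rfl, PNat.val_ofNat, PNat.one_coe] at h2
    exact h2
  -- D e5 = [v,e3] + [e2,[e1,v]]
  have hD5a : D (e 5) = ⁅v, e 3⁆ + ⁅e 2, ⁅e 1, v⁆⁆ := by
    have h2 : D ⁅e 2, e 3⁆ = ⁅v, e 3⁆ + ⁅e 2, ⁅e 1, v⁆⁆ := by rw [hleib, hD3, ← hv]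
    rw [hb, map_smul] at h2
    norm_num [show (2+3:ℕ+) = 5 from rfl, PNat.val_ofNat] at h2
    exact h2
  -- the key vector equation
  have hE : ⁅e 1, ⁅e 1, ⁅e 1, v⁆⁆⁆ = (6:K) • ⁅v, e 3⁆ + (6:K) • ⁅e 2, ⁅e 1, v⁆⁆ := by
    have c1 : (6:K) • D (e 5) = ⁅e 1, ⁅e 1, ⁅e 1, v⁆⁆⁆ := by
      calc (6:K) • D (e 5) = (2:K) • ((3:K) • D (e 5)) := by rw [smul_smul]; norm_num
        _ = (2:K) • ⁅e 1, D (e 4)⁆ := by rw [hD5b]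
        _ = ⁅e 1, (2:K) • D (e 4)⁆ := (lie_smul _ _ _).symm
        _ = ⁅e 1, ⁅e 1, ⁅e 1, v⁆⁆⁆ := by rw [hD4]
    rw [← c1, hD5a, smul_add]
  -- coefficient extraction
  have hcoef : ∀ k : ℕ+, k ≠ 3 → e.repr v k = 0 := by
    intro k hk
    have hL : (e.repr ⁅e 1, ⁅e 1, ⁅e 1, v⁆⁆⁆) (k + 3)
        = (((k:ℕ):K) + 1) * ((k:ℕ):K) * (((k:ℕ):K) - 1) * (e.repr v) k := by
      rw [show k + 3 = (k+2) + 1 from by rw [add_assoc]; rfl, repr_lie e hb,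
        show k + 2 = (k+1) + 1 from by rw [add_assoc]; rfl, repr_lie e hb, repr_lie e hb]
      push_cast
      ring
    have hR1 : (e.repr ⁅v, e 3⁆) (k + 3) = -(((k:ℕ):K) - 3) * (e.repr v) k := by
      rw [show ⁅v, e 3⁆ = -⁅e 3, v⁆ from (lie_skew v (e 3)).symm, map_neg, Finsupp.neg_apply,
        repr_lie e hb]
      push_cast
      ring
    have hR2 : (e.repr ⁅e 2, ⁅e 1, v⁆⁆) (k + 3)
        = (((k:ℕ):K) - 1) ^ 2 * (e.repr v) k := by
      rw [show k + 3 = (k+1) + 2 from by rw [add_assoc]; rfl, repr_lie e hb, repr_lie e hb]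
      push_cast
      ring
    have hE' := congrArg (fun y => (e.repr y) (k + 3)) hE
    simp only [map_add, map_smul, Finsupp.add_apply, Finsupp.smul_apply, smul_eq_mul] at hE'
    rw [hL, hR1, hR2] at hE'
    -- now a scalar cubic equation
    set z : ℤ := ((k:ℕ):ℤ) with hz
    have hzk : ((z : ℤ) : K) = ((k:ℕ):K) := by rw [hz]; exact Int.cast_natCast _
    have hPK : ((z^3 - 6*z^2 + 17*z - 24 : ℤ) : K) * (e.repr v) k = 0 := by
      push_cast
      rw [hzk]
      linear_combination hE'
    have hP : (z^3 - 6*z^2 + 17*z - 24 : ℤ) ≠ 0 := by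
      intro h0
      have h2 : (z - 3) * (z^2 - 3*z + 8) = 0 := by linear_combination h0
      rcases mul_eq_zero.mp h2 with h3 | h3
      · apply hk
        apply PNat.coe_injective
        have : (k:ℕ) = 3 := by omega
        simp [this]
      · nlinarith [sq_nonneg (2*z - 3)]
    rcases mul_eq_zero.mp hPK with h3 | h3
    · exact absurd (Int.cast_eq_zero.mp h3) hP
    · exact h3
  -- v = c • e 3, conclude
  have hv3 : v = e.repr v 3 • e 3 := eq_single_basis e v 3 hcoef
  refine ⟨e.repr v 3, ?_⟩
  set c : K := e.repr v 3
  have hD' : ∀ x : L, (D - c • (LieAlgebra.ad K L (e 1))) x = 0 := by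
    apply wittDerivZero e hb
    · intro u w
      simp only [LinearMap.sub_apply, LinearMap.smul_apply, LieAlgebra.ad_apply, hleib]
      rw [leibniz_lie]
      rw [smul_add, sub_lie, lie_sub, smul_lie, lie_smul]
      abel
    · simp [LieAlgebra.ad_apply, h1]
    · simp only [LinearMap.sub_apply, LinearMap.smul_apply, LieAlgebra.ad_apply]
      rw [← hv, he3, hv3]
      simp
  intro x
  have := hD' x
  simp only [LinearMap.sub_apply, LinearMap.smul_apply, LieAlgebra.ad_apply] at this
  rw [sub_eq_zero] at this
  exact this

lemma lemB' (e : Module.Basis ℕ+ K L)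
    (hb : ∀ i j : ℕ+, ⁅e i, e j⁆ = (((j : ℕ) : K) - ((i : ℕ) : K)) • e (i + j))
    (D : L →ₗ[K] L) (hleib : ∀ u v : L, D ⁅u, v⁆ = ⁅D u, v⁆ + ⁅u, D v⁆)
    (h2 : D (e 2) = 0) :
    ∃ c : K, ∀ x : L, D x = c • ⁅e 2, x⁆ := by
  set w := D (e 1) with hw
  have he3 : ⁅e 1, e 2⁆ = e 3 := by
    rw [hb]; norm_num [show (1+2:ℕ+) = 3 from rfl, PNat.val_ofNat, PNat.one_coe]
  have hD3 : D (e 3) = ⁅w, e 2⁆ := by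
    rw [← he3, hleib, h2, lie_zero, add_zero]
  have hD4 : (2:K) • D (e 4) = ⁅w, e 3⁆ + ⁅e 1, ⁅w, e 2⁆⁆ := by
    have h2' : D ⁅e 1, e 3⁆ = ⁅w, e 3⁆ + ⁅e 1, ⁅w, e 2⁆⁆ := by rw [hleib, hD3, ← hw]
    rw [hb, map_smul] at h2'
    norm_num [show (1+3:ℕ+) = 4 from rfl, PNat.val_ofNat, PNat.one_coe] at h2'
    exact h2'
  have hD5b : (3:K) • D (e 5) = ⁅w, e 4⁆ + ⁅e 1, D (e 4)⁆ := by
    have h2' : D ⁅e 1, e 4⁆ = ⁅w, e 4⁆ + ⁅e 1, D (e 4)⁆ := by rw [hleib, ← hw]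
    rw [hb, map_smul] at h2'
    norm_num [show (1+4:ℕ+) = 5 from rfl, PNat.val_ofNat, PNat.one_coe] at h2'
    exact h2'
  have hD5a : D (e 5) = ⁅e 2, ⁅w, e 2⁆⁆ := by
    have h2' : D ⁅e 2, e 3⁆ = ⁅e 2, ⁅w, e 2⁆⁆ := by rw [hleib, h2, hD3, zero_lie, zero_add]
    rw [hb, map_smul] at h2'
    norm_num [show (2+3:ℕ+) = 5 from rfl, PNat.val_ofNat] at h2'
    exact h2'
  have hE : (6:K) • ⁅e 2, ⁅w, e 2⁆⁆
      = (2:K) • ⁅w, e 4⁆ + ⁅e 1, ⁅w, e 3⁆⁆ + ⁅e 1, ⁅e 1, ⁅w, e 2⁆⁆⁆ := by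
    have c1 : (6:K) • D (e 5) = (2:K) • (⁅w, e 4⁆ + ⁅e 1, D (e 4)⁆) := by
      rw [← hD5b, smul_smul]; norm_num
    rw [hD5a] at c1
    have h4' : (2:K) • ⁅e 1, D (e 4)⁆ = ⁅e 1, ⁅w, e 3⁆⁆ + ⁅e 1, ⁅e 1, ⁅w, e 2⁆⁆⁆ := by
      rw [← lie_smul, hD4, lie_add]
    rw [c1, smul_add, h4', add_assoc]
  have hcoef : ∀ k : ℕ+, k ≠ 3 → e.repr w k = 0 := by
    intro k hk
    have hL : (e.repr ⁅e 2, ⁅w, e 2⁆⁆) (k + 4)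
        = -((k:ℕ):K) * (((k:ℕ):K) - 2) * (e.repr w) k := by
      rw [show k + 4 = (k+2) + 2 from by rw [add_assoc]; rfl, repr_lie e hb,
        show ⁅w, e 2⁆ = -⁅e 2, w⁆ from (lie_skew w (e 2)).symm, map_neg, Finsupp.neg_apply,
        repr_lie e hb]
      push_cast
      ring
    have hR1 : (e.repr ⁅w, e 4⁆) (k + 4) = -(((k:ℕ):K) - 4) * (e.repr w) k := by
      rw [show ⁅w, e 4⁆ = -⁅e 4, w⁆ from (lie_skew w (e 4)).symm, map_neg, Finsupp.neg_apply,
        repr_lie e hb]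
      push_cast
      ring
    have hR2 : (e.repr ⁅e 1, ⁅w, e 3⁆⁆) (k + 4)
        = -(((k:ℕ):K) + 2) * (((k:ℕ):K) - 3) * (e.repr w) k := by
      rw [show k + 4 = (k+3) + 1 from by rw [add_assoc]; rfl, repr_lie e hb,
        show ⁅w, e 3⁆ = -⁅e 3, w⁆ from (lie_skew w (e 3)).symm, map_neg, Finsupp.neg_apply,
        repr_lie e hb]
      push_cast
      ring
    have hR3 : (e.repr ⁅e 1, ⁅e 1, ⁅w, e 2⁆⁆⁆) (k + 4)
        = -(((k:ℕ):K) + 2) * (((k:ℕ):K) + 1) * (((k:ℕ):K) - 2) * (e.repr w) k := by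
      rw [show k + 4 = (k+3) + 1 from by rw [add_assoc]; rfl, repr_lie e hb,
        show k + 3 = (k+2) + 1 from by rw [add_assoc]; rfl, repr_lie e hb,
        show ⁅w, e 2⁆ = -⁅e 2, w⁆ from (lie_skew w (e 2)).symm, map_neg, Finsupp.neg_apply,
        repr_lie e hb]
      push_cast
      ring
    have hE' := congrArg (fun y => (e.repr y) (k + 4)) hE
    simp only [map_add, map_smul, Finsupp.add_apply, Finsupp.smul_apply, smul_eq_mul] at hE'
    rw [hL, hR1, hR2, hR3] at hE'
    set z : ℤ := ((k:ℕ):ℤ) with hz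
    have hzk : ((z : ℤ) : K) = ((k:ℕ):K) := by rw [hz]; exact Int.cast_natCast _
    have hPK : ((z^3 - 4*z^2 + 9*z - 18 : ℤ) : K) * (e.repr w) k = 0 := by
      push_cast
      rw [hzk]
      linear_combination hE'
    have hP : (z^3 - 4*z^2 + 9*z - 18 : ℤ) ≠ 0 := by
      intro h0
      have h2' : (z - 3) * (z^2 - z + 6) = 0 := by linear_combination h0
      rcases mul_eq_zero.mp h2' with h3 | h3
      · apply hk
        apply PNat.coe_injective
        have : (k:ℕ) = 3 := by omega
        simp [this]
      · nlinarith [sq_nonneg (2*z - 1)]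
    rcases mul_eq_zero.mp hPK with h3 | h3
    · exact absurd (Int.cast_eq_zero.mp h3) hP
    · exact h3
  have hw3 : w = e.repr w 3 • e 3 := eq_single_basis e w 3 hcoef
  refine ⟨-(e.repr w 3), ?_⟩
  set c : K := -(e.repr w 3) with hc
  have he21 : ⁅e 2, e 1⁆ = -(e 3) := by
    rw [hb, show (2+1:ℕ+) = 3 from rfl]
    norm_num [PNat.val_ofNat, PNat.one_coe]
  have hD' : ∀ x : L, (D - c • (LieAlgebra.ad K L (e 2))) x = 0 := by
    apply wittDerivZero e hb
    · intro u w'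
      simp only [LinearMap.sub_apply, LinearMap.smul_apply, LieAlgebra.ad_apply, hleib]
      rw [leibniz_lie]
      rw [smul_add, sub_lie, lie_sub, smul_lie, lie_smul]
      abel
    · simp only [LinearMap.sub_apply, LinearMap.smul_apply, LieAlgebra.ad_apply]
      rw [← hw, he21, hw3, hc]
      simp
    · simp [LieAlgebra.ad_apply, h2]
  intro x
  have := hD' x
  simp only [LinearMap.sub_apply, LinearMap.smul_apply, LieAlgebra.ad_apply] at this
  rw [sub_eq_zero] at this
  exact this

lemma lemC (e : Module.Basis ℕ+ K L)
    (hb : ∀ i j : ℕ+, ⁅e i, e j⁆ = (((j : ℕ) : K) - ((i : ℕ) : K)) • e (i + j))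
    (D : L →ₗ[K] L) (hleib : ∀ u v : L, D ⁅u, v⁆ = ⁅D u, v⁆ + ⁅u, D v⁆)
    (h3 : D (e 3) = 0) :
    ∃ c : K, ∀ x : L, D x = c • ⁅e 3, x⁆ := by
  set w := D (e 1) with hw
  set v := D (e 2) with hv
  have he3 : ⁅e 1, e 2⁆ = e 3 := by
    rw [hb]; norm_num [show (1+2:ℕ+) = 3 from rfl, PNat.val_ofNat, PNat.one_coe]
  have hIa : ⁅w, e 2⁆ + ⁅e 1, v⁆ = 0 := by
    rw [← hleib, he3, h3]
  have hD4 : (2:K) • D (e 4) = ⁅w, e 3⁆ := by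
    have h2' : D ⁅e 1, e 3⁆ = ⁅w, e 3⁆ := by rw [hleib, h3, lie_zero, add_zero, ← hw]
    rw [hb, map_smul] at h2'
    norm_num [show (1+3:ℕ+) = 4 from rfl, PNat.val_ofNat, PNat.one_coe] at h2'
    exact h2'
  have hD5a : D (e 5) = ⁅v, e 3⁆ := by
    have h2' : D ⁅e 2, e 3⁆ = ⁅v, e 3⁆ := by rw [hleib, h3, lie_zero, add_zero, ← hv]
    rw [hb, map_smul] at h2'
    norm_num [show (2+3:ℕ+) = 5 from rfl, PNat.val_ofNat] at h2'
    exact h2'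
  have hD5b : (3:K) • D (e 5) = ⁅w, e 4⁆ + ⁅e 1, D (e 4)⁆ := by
    have h2' : D ⁅e 1, e 4⁆ = ⁅w, e 4⁆ + ⁅e 1, D (e 4)⁆ := by rw [hleib, ← hw]
    rw [hb, map_smul] at h2'
    norm_num [show (1+4:ℕ+) = 5 from rfl, PNat.val_ofNat, PNat.one_coe] at h2'
    exact h2'
  have hE : (6:K) • ⁅v, e 3⁆ = (2:K) • ⁅w, e 4⁆ + ⁅e 1, ⁅w, e 3⁆⁆ := by
    have c1 : (6:K) • D (e 5) = (2:K) • (⁅w, e 4⁆ + ⁅e 1, D (e 4)⁆) := by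
      rw [← hD5b, smul_smul]; norm_num
    rw [hD5a] at c1
    have h4' : (2:K) • ⁅e 1, D (e 4)⁆ = ⁅e 1, ⁅w, e 3⁆⁆ := by
      rw [← lie_smul, hD4]
    rw [c1, smul_add, h4']
  -- coefficient relations
  have hi : ∀ k : ℕ+, ((k:ℕ):K) * (e.repr v) (k+1) = (((k:ℕ):K) - 2) * (e.repr w) k := by
    intro k
    have h' := congrArg (fun y => (e.repr y) (k + 2)) hIa
    simp only [map_add, Finsupp.add_apply, map_zero, Finsupp.zero_apply] at h'
    rw [show ⁅w, e 2⁆ = -⁅e 2, w⁆ from (lie_skew w (e 2)).symm, map_neg, Finsupp.neg_apply,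
      repr_lie e hb] at h'
    rw [show k + 2 = (k+1) + 1 from by rw [add_assoc]; rfl, repr_lie e hb] at h'
    push_cast at h'
    linear_combination h'
  have hW : ∀ k : ℕ+, k ≠ 4 → e.repr w k = 0 := by
    intro k hk
    have hL : (e.repr ((6:K) • ⁅v, e 3⁆)) (k + 4)
        = -6 * (((k:ℕ):K) - 2) * (e.repr v) (k+1) := by
      rw [map_smul, Finsupp.smul_apply, show ⁅v, e 3⁆ = -⁅e 3, v⁆ from (lie_skew v (e 3)).symm,
        map_neg, Finsupp.neg_apply, show k + 4 = (k+1) + 3 from by rw [add_assoc]; rfl,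
        repr_lie e hb, smul_eq_mul]
      push_cast
      ring
    have hR1 : (e.repr ⁅w, e 4⁆) (k + 4) = -(((k:ℕ):K) - 4) * (e.repr w) k := by
      rw [show ⁅w, e 4⁆ = -⁅e 4, w⁆ from (lie_skew w (e 4)).symm, map_neg, Finsupp.neg_apply,
        repr_lie e hb]
      push_cast
      ring
    have hR2 : (e.repr ⁅e 1, ⁅w, e 3⁆⁆) (k + 4)
        = -(((k:ℕ):K) + 2) * (((k:ℕ):K) - 3) * (e.repr w) k := by
      rw [show k + 4 = (k+3) + 1 from by rw [add_assoc]; rfl, repr_lie e hb,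
        show ⁅w, e 3⁆ = -⁅e 3, w⁆ from (lie_skew w (e 3)).symm, map_neg, Finsupp.neg_apply,
        repr_lie e hb]
      push_cast
      ring
    have hE' := congrArg (fun y => (e.repr y) (k + 4)) hE
    simp only [map_add, Finsupp.add_apply] at hE'
    rw [hL] at hE'
    rw [map_smul, Finsupp.smul_apply, smul_eq_mul, hR1, hR2] at hE'
    set z : ℤ := ((k:ℕ):ℤ) with hz
    have hzk : ((z : ℤ) : K) = ((k:ℕ):K) := by rw [hz]; exact Int.cast_natCast _
    have hPK : ((z^3 - 5*z^2 + 10*z - 24 : ℤ) : K) * (e.repr w) k = 0 := by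
      push_cast
      rw [hzk]
      linear_combination 6 * (((k:ℕ):K) - 2) * hi k + ((k:ℕ):K) * hE'
    have hP : (z^3 - 5*z^2 + 10*z - 24 : ℤ) ≠ 0 := by
      intro h0
      have h2' : (z - 4) * (z^2 - z + 6) = 0 := by linear_combination h0
      rcases mul_eq_zero.mp h2' with hz3 | hz3
      · apply hk
        apply PNat.coe_injective
        have : (k:ℕ) = 4 := by omega
        simp [this]
      · nlinarith [sq_nonneg (2*z - 1)]
    rcases mul_eq_zero.mp hPK with hz3 | hz3
    · exact absurd (Int.cast_eq_zero.mp hz3) hP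
    · exact hz3
  have hV1 : e.repr v 1 = 0 := by
    have hE' := congrArg (fun y => (e.repr y) 4) hE
    simp only [map_add, Finsupp.add_apply, map_smul, Finsupp.smul_apply, smul_eq_mul] at hE'
    have ha : (e.repr ⁅v, e 3⁆) 4 = 2 * e.repr v 1 := by
      rw [show ⁅v, e 3⁆ = -⁅e 3, v⁆ from (lie_skew v (e 3)).symm, map_neg, Finsupp.neg_apply,
        show (4:ℕ+) = 1 + 3 from rfl, repr_lie e hb]
      push_cast
      ring
    have hbb : (e.repr ⁅w, e 4⁆) 4 = 0 := by
      rw [show ⁅w, e 4⁆ = -⁅e 4, w⁆ from (lie_skew w (e 4)).symm, map_neg, Finsupp.neg_apply,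
        repr_lie_low e hb 4 4 le_rfl, neg_zero]
    have hcc : (e.repr ⁅e 1, ⁅w, e 3⁆⁆) 4 = 0 := by
      rw [show (4:ℕ+) = 3 + 1 from rfl, repr_lie e hb,
        show ⁅w, e 3⁆ = -⁅e 3, w⁆ from (lie_skew w (e 3)).symm, map_neg, Finsupp.neg_apply,
        repr_lie_low e hb 3 3 le_rfl, neg_zero, mul_zero]
    rw [ha, hbb, hcc] at hE'
    have h12 : (12:K) * e.repr v 1 = 0 := by linear_combination hE'
    have : (12:K) ≠ 0 := by norm_num
    exact (mul_eq_zero.mp h12).resolve_left this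
  have hV : ∀ j : ℕ+, j ≠ 5 → e.repr v j = 0 := by
    intro j hj
    rcases eq_or_ne j 1 with rfl | hj1
    · exact hV1
    · obtain ⟨k, rfl⟩ : ∃ k : ℕ+, j = k + 1 := by
        rcases j with ⟨m, hm⟩
        have hm1 : m ≠ 1 := fun h => hj1 (by apply PNat.coe_injective; simp [h])
        refine ⟨⟨m - 1, by omega⟩, ?_⟩
        apply PNat.coe_injective
        push_cast
        simp
        show m = m - 1 + 1
        omega
      have hk4 : k ≠ 4 := by
        intro h
        exact hj (by rw [h]; rfl)
      have := hi k
      rw [hW k hk4, mul_zero] at this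
      have hkne : ((k:ℕ):K) ≠ 0 := Nat.cast_ne_zero.mpr (by exact_mod_cast k.pos.ne')
      exact (mul_eq_zero.mp this).resolve_left hkne
  -- pin down v and w
  have hw4 : w = e.repr w 4 • e 4 := eq_single_basis e w 4 hW
  have hv5 : v = e.repr v 5 • e 5 := eq_single_basis e v 5 hV
  have hrel : (4:K) * e.repr v 5 = 2 * e.repr w 4 := by
    have h4 := hi 4
    rw [show (4:ℕ+) + 1 = 5 from rfl] at h4
    norm_num [PNat.val_ofNat] at h4
    linear_combination h4
  refine ⟨-(e.repr w 4) / 2, ?_⟩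
  set c : K := -(e.repr w 4) / 2 with hc
  have he31 : ⁅e 3, e 1⁆ = (-2:K) • e 4 := by
    rw [hb, show (3+1:ℕ+) = 4 from rfl]
    norm_num [PNat.val_ofNat, PNat.one_coe]
  have he32 : ⁅e 3, e 2⁆ = -(e 5) := by
    rw [hb, show (3+2:ℕ+) = 5 from rfl]
    norm_num [PNat.val_ofNat]
  have hD' : ∀ x : L, (D - c • (LieAlgebra.ad K L (e 3))) x = 0 := by
    apply wittDerivZero e hb
    · intro u w'
      simp only [LinearMap.sub_apply, LinearMap.smul_apply, LieAlgebra.ad_apply, hleib]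
      rw [leibniz_lie]
      rw [smul_add, sub_lie, lie_sub, smul_lie, lie_smul]
      abel
    · simp only [LinearMap.sub_apply, LinearMap.smul_apply, LieAlgebra.ad_apply]
      rw [← hw, he31, hw4, hc, smul_smul]
      rw [sub_eq_zero]
      congr 1
      field_simp
    · simp only [LinearMap.sub_apply, LinearMap.smul_apply, LieAlgebra.ad_apply]
      rw [← hv, he32, hv5, hc]
      rw [sub_eq_zero, smul_neg, ← neg_smul]
      congr 1
      linear_combination (1/4 : K) * hrel
  intro x
  have := hD' x
  simp only [LinearMap.sub_apply, LinearMap.smul_apply, LieAlgebra.ad_apply] at this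
  rw [sub_eq_zero] at this
  exact this

end

/-- Every 2-local derivation on the positive Witt algebra is a derivation. -/
theorem posWitt_twoLocal_is_derivation {K L : Type*} [Field K] [CharZero K]
    [LieRing L] [LieAlgebra K L]
    (e : Module.Basis ℕ+ K L)
    (hb : ∀ i j : ℕ+, ⁅e i, e j⁆ = (((j : ℕ) : K) - ((i : ℕ) : K)) • e (i + j))
    (Δ : L → L)
    (h2loc : ∀ x y : L, ∃ D : L →ₗ[K] L,
      (∀ u v : L, D ⁅u, v⁆ = ⁅D u, v⁆ + ⁅u, D v⁆) ∧ Δ x = D x ∧ Δ y = D y) :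
    ∃ D : L →ₗ[K] L,
      (∀ u v : L, D ⁅u, v⁆ = ⁅D u, v⁆ + ⁅u, D v⁆) ∧ ∀ x : L, Δ x = D x := by
  obtain ⟨D₀, leib₀, h01, h02⟩ := h2loc (e 1) (e 2)
  refine ⟨D₀, leib₀, ?_⟩
  -- difference of derivations is a derivation
  have subleib : ∀ (D₁ : L →ₗ[K] L), (∀ u v : L, D₁ ⁅u, v⁆ = ⁅D₁ u, v⁆ + ⁅u, D₁ v⁆) →
      ∀ u v : L, (D₁ - D₀) ⁅u, v⁆ = ⁅(D₁ - D₀) u, v⁆ + ⁅u, (D₁ - D₀) v⁆ := by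
    intro D₁ leib₁ u v
    simp only [LinearMap.sub_apply, leib₀, leib₁, sub_lie, lie_sub]
    abel
  have key1 : ∀ x : L, ∃ c : K, Δ x - D₀ x = c • ⁅e 1, x⁆ := by
    intro x
    obtain ⟨D₁, leib₁, hx, he⟩ := h2loc x (e 1)
    have h1 : (D₁ - D₀) (e 1) = 0 := by
      simp only [LinearMap.sub_apply]
      rw [← he, ← h01, sub_self]
    obtain ⟨c, hc⟩ := lemB e hb (D₁ - D₀) (subleib D₁ leib₁) h1
    refine ⟨c, ?_⟩
    have := hc x
    simp only [LinearMap.sub_apply] at this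
    rw [← hx] at this
    exact this
  have key2 : ∀ x : L, ∃ c : K, Δ x - D₀ x = c • ⁅e 2, x⁆ := by
    intro x
    obtain ⟨D₁, leib₁, hx, he⟩ := h2loc x (e 2)
    have h1 : (D₁ - D₀) (e 2) = 0 := by
      simp only [LinearMap.sub_apply]
      rw [← he, ← h02, sub_self]
    obtain ⟨c, hc⟩ := lemB' e hb (D₁ - D₀) (subleib D₁ leib₁) h1
    refine ⟨c, ?_⟩
    have := hc x
    simp only [LinearMap.sub_apply] at this
    rw [← hx] at this
    exact this
  -- Δ agrees with D₀ at e 3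
  have h03 : Δ (e 3) = D₀ (e 3) := by
    obtain ⟨c1, hc1⟩ := key1 (e 3)
    obtain ⟨c2, hc2⟩ := key2 (e 3)
    have hcc := congrArg (fun y => (e.repr y) 4) (hc1.symm.trans hc2)
    simp only [map_smul, Finsupp.smul_apply, smul_eq_mul] at hcc
    rw [show (4:ℕ+) = 3 + 1 from rfl, repr_lie e hb] at hcc
    rw [show (3:ℕ+) + 1 = 2 + 2 from rfl, repr_lie e hb] at hcc
    simp only [Module.Basis.repr_self_apply] at hcc
    norm_num [PNat.val_ofNat, PNat.one_coe] at hcc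
    rw [← sub_eq_zero, hc1, hcc, zero_smul]
  have key3 : ∀ x : L, ∃ c : K, Δ x - D₀ x = c • ⁅e 3, x⁆ := by
    intro x
    obtain ⟨D₁, leib₁, hx, he⟩ := h2loc x (e 3)
    have h1 : (D₁ - D₀) (e 3) = 0 := by
      simp only [LinearMap.sub_apply]
      rw [← he, ← h03, sub_self]
    obtain ⟨c, hc⟩ := lemC e hb (D₁ - D₀) (subleib D₁ leib₁) h1
    refine ⟨c, ?_⟩
    have := hc x
    simp only [LinearMap.sub_apply] at this
    rw [← hx] at this
    exact this
  -- main argument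
  intro x
  rw [← sub_eq_zero]
  obtain ⟨c1, hc1⟩ := key1 x
  obtain ⟨c2, hc2⟩ := key2 x
  obtain ⟨c3, hc3⟩ := key3 x
  by_cases hc10 : c1 = 0
  · rw [hc1, hc10, zero_smul]
  by_cases hc30 : c3 = 0
  · rw [hc3, hc30, zero_smul]
  by_cases hx0 : x = 0
  · rw [hc1, hx0, lie_zero, smul_zero]
  -- X 3 = 0
  have hX3 : e.repr x 3 = 0 := by
    have hcc := congrArg (fun y => (e.repr y) 4) (hc1.symm.trans hc2)
    simp only [map_smul, Finsupp.smul_apply, smul_eq_mul] at hcc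
    rw [show (4:ℕ+) = 3 + 1 from rfl, repr_lie e hb] at hcc
    rw [show (3:ℕ+) + 1 = 2 + 2 from rfl, repr_lie e hb] at hcc
    norm_num [PNat.val_ofNat, PNat.one_coe] at hcc
    rcases hcc with h | h
    · exact absurd h hc10
    · exact h
  -- top degree
  have hsupp : (e.repr x).support.Nonempty := by
    rw [Finsupp.support_nonempty_iff]
    intro h
    exact hx0 (e.repr.map_eq_zero_iff.mp h)
  set N := (e.repr x).support.max' hsupp with hN
  have hNmem : e.repr x N ≠ 0 := Finsupp.mem_support_iff.mp (Finset.max'_mem _ hsupp)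
  have hNtop : e.repr x (N + 2) = 0 := by
    by_contra h
    have hle := Finset.le_max' (e.repr x).support (N + 2) (Finsupp.mem_support_iff.mpr h)
    rw [← hN] at hle
    exact absurd hle (not_le.mpr (PNat.lt_add_right N 2))
  have hcc := congrArg (fun y => (e.repr y) (N + 3)) (hc3.symm.trans hc1)
  simp only [map_smul, Finsupp.smul_apply, smul_eq_mul] at hcc
  rw [repr_lie e hb] at hcc
  rw [show N + 3 = (N + 2) + 1 from by rw [add_assoc]; rfl, repr_lie e hb, hNtop] at hcc
  rw [mul_zero, mul_zero] at hcc
  rcases mul_eq_zero.mp hcc with h | h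
  · exact absurd h hc30
  rcases mul_eq_zero.mp h with h | h
  · -- (N:K) - 3 = 0 → N = 3 → contradiction with hX3
    exfalso
    have hN3 : (N : ℕ) = 3 := by
      have : ((N:ℕ):K) = ((3:ℕ):K) := by
        rw [sub_eq_zero] at h
        rw [h]; norm_num [PNat.val_ofNat]
      exact_mod_cast this
    have : N = (3:ℕ+) := by
      apply PNat.coe_injective
      simp [hN3, PNat.val_ofNat]
    rw [this] at hNmem
    exact hNmem hX3
  · exact absurd h hNmem
end

section
/- Define Δ on the thin Lie algebra L by Δ(Σ x_i e_i) = Σ_{i≥2} x_i e_i if x_1 ≠ 0, and Δ(x) = 0 if x_1 = 0. Then Δ is a 2-local derivation on L: for every pair x, y ∈ L there exists a derivation D of L with Δ(x) = D(x) and Δ(y) = D(y). -/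
private lemma pnat_two_le {n : ℕ+} (h : n ≠ 1) : 2 ≤ n := by
  have h1 : (1:ℕ) ≤ (n:ℕ) := n.one_le
  have h2 : (n:ℕ) ≠ 1 := fun hh => h (PNat.coe_inj.mp (by simpa using hh))
  rw [← PNat.coe_le_coe]
  have h3 : ((2:ℕ+):ℕ) = 2 := rfl
  omega

private lemma pnat_succ_ne_one (n : ℕ+) : n + 1 ≠ 1 := by
  intro h
  have h' : ((n + 1 : ℕ+) : ℕ) = 1 := by rw [h]; rfl
  have hn : 0 < (n:ℕ) := n.pos
  push_cast at h'
  omega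

/-- The map `Δ` on the thin Lie algebra sending `x = ∑ xᵢ eᵢ` to `∑_{i≥2} xᵢ eᵢ`
(i.e., `x - x₁ • e 1`) when `x₁ ≠ 0`, and to `0` when `x₁ = 0`, is a 2-local
derivation. -/
theorem thin_Delta_is_twoLocal {L : Type*} [LieRing L] [LieAlgebra ℂ L]
    (e : Module.Basis ℕ+ ℂ L)
    (hb1 : ∀ n : ℕ+, 2 ≤ n → ⁅e 1, e n⁆ = e (n + 1))
    (hb2 : ∀ i j : ℕ+, 2 ≤ i → 2 ≤ j → ⁅e i, e j⁆ = 0)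
    (Δ : L → L)
    (hΔ : ∀ x : L, Δ x = if e.repr x 1 = 0 then 0 else x - e.repr x 1 • e 1) :
    ∀ x y : L, ∃ D : L →ₗ[ℂ] L,
      (∀ u v : L, D ⁅u, v⁆ = ⁅D u, v⁆ + ⁅u, D v⁆) ∧ Δ x = D x ∧ Δ y = D y := by
  classical
  set M : Submodule ℂ L := Submodule.span ℂ (e '' {n : ℕ+ | 2 ≤ n}) with hMdef
  -- elements with vanishing first coordinate lie in the span of `e n`, `n ≥ 2`
  have hM : ∀ u : L, e.repr u 1 = 0 → u ∈ M := by
    intro u hu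
    have h := e.linearCombination_repr u
    rw [Finsupp.linearCombination_apply] at h
    rw [← h]
    refine Submodule.sum_mem _ (fun n hn' => ?_)
    have hn := Finsupp.mem_support_iff.mp hn'
    have hn1 : n ≠ 1 := by
      intro h1; subst h1; exact hn hu
    exact Submodule.smul_mem _ _ (Submodule.subset_span ⟨n, pnat_two_le hn1, rfl⟩)
  -- brackets of elements of M vanish
  have h2 : ∀ u ∈ M, ∀ v ∈ M, ⁅u, v⁆ = 0 := by
    intro u hu
    induction hu using Submodule.span_induction with
    | mem z hz =>
      intro v hv
      induction hv using Submodule.span_induction with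
      | mem w hw =>
        obtain ⟨i, hi, rfl⟩ := hz
        obtain ⟨j, hj, rfl⟩ := hw
        exact hb2 i j hi hj
      | zero => simp
      | add a b _ _ ha hb => simp [lie_add, ha, hb]
      | smul t a _ ha => simp [lie_smul, ha]
    | zero => intro v hv; simp
    | add a b _ _ ha hb => intro v hv; simp [add_lie, ha v hv, hb v hv]
    | smul t a _ ha => intro v hv; simp [smul_lie, ha v hv]
  have ce1 : e.repr (e 1) 1 = 1 := by simp
  -- first coordinate of ⁅e 1, w⁆ vanishes
  have K2span : ∀ v ∈ M, e.repr ⁅e 1, v⁆ 1 = 0 := by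
    intro v hv
    induction hv using Submodule.span_induction with
    | mem w hw =>
      obtain ⟨n, hn, rfl⟩ := hw
      rw [hb1 n hn]
      simp [Finsupp.single_apply, pnat_succ_ne_one n]
    | zero => simp
    | add a b _ _ ha hb => rw [lie_add, map_add]; simp [ha, hb]
    | smul t a _ ha => rw [lie_smul, map_smul]; simp [ha]
  have K2 : ∀ w : L, e.repr ⁅e 1, w⁆ 1 = 0 := by
    intro w
    have hw' : e.repr (w - e.repr w 1 • e 1) 1 = 0 := by
      simp [map_sub, map_smul, ce1]
    have : ⁅e 1, w⁆ = ⁅e 1, w - e.repr w 1 • e 1⁆ := by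
      rw [lie_sub, lie_smul, lie_self, smul_zero, sub_zero]
    rw [this]
    exact K2span _ (hM _ hw')
  -- key structural identity
  have K1 : ∀ u v : L, ⁅u, v⁆ = e.repr u 1 • ⁅e 1, v⁆ - e.repr v 1 • ⁅e 1, u⁆ := by
    intro u v
    have hu' : e.repr (u - e.repr u 1 • e 1) 1 = 0 := by
      simp [map_sub, map_smul, ce1]
    have hv' : e.repr (v - e.repr v 1 • e 1) 1 = 0 := by
      simp [map_sub, map_smul, ce1]
    have h0 : ⁅u - e.repr u 1 • e 1, v - e.repr v 1 • e 1⁆ = 0 :=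
      h2 _ (hM _ hu') _ (hM _ hv')
    have hue : ⁅u, e 1⁆ = -⁅e 1, u⁆ := (lie_skew _ _).symm
    simp only [sub_lie, lie_sub, smul_lie, lie_smul, lie_self, smul_zero, sub_zero, hue,
      smul_neg, sub_neg_eq_add] at h0
    -- h0 : ⁅u, v⁆ + e.repr v 1 • -⁅e 1, u⁆ - ... = 0 style; finish linearly
    linear_combination (norm := module) h0
  have cbr : ∀ u v : L, e.repr ⁅u, v⁆ 1 = 0 := by
    intro u v
    rw [K1 u v]
    simp [map_sub, map_smul, K2]
  intro x y
  by_cases hx : e.repr x 1 = 0 <;> by_cases hy : e.repr y 1 = 0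
  · -- both zero: D = 0
    refine ⟨0, by simp, ?_, ?_⟩ <;> simp [hΔ, hx, hy]
  · -- x₁ = 0, y₁ ≠ 0 : D = D₁ with w = y₁⁻¹ • (y - y₁ • e 1)
    set w : L := (e.repr y 1)⁻¹ • (y - e.repr y 1 • e 1) with hwdef
    have hw : e.repr w 1 = 0 := by
      simp [hwdef, map_sub, map_smul, ce1]
    refine ⟨(e.coord 1).smulRight w, ?_, ?_, ?_⟩
    · intro u v
      simp only [LinearMap.smulRight_apply, Module.Basis.coord_apply, cbr u v, zero_smul]
      rw [smul_lie, lie_smul, K1 w v, K1 u w, hw]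
      module
    · simp [hΔ, hx, LinearMap.smulRight_apply, Module.Basis.coord_apply]
    · rw [hΔ y, if_neg hy]
      simp [LinearMap.smulRight_apply, Module.Basis.coord_apply, hwdef, smul_smul,
        mul_inv_cancel₀ hy]
  · -- x₁ ≠ 0, y₁ = 0 : symmetric
    set w : L := (e.repr x 1)⁻¹ • (x - e.repr x 1 • e 1) with hwdef
    have hw : e.repr w 1 = 0 := by
      simp [hwdef, map_sub, map_smul, ce1]
    refine ⟨(e.coord 1).smulRight w, ?_, ?_, ?_⟩
    · intro u v
      simp only [LinearMap.smulRight_apply, Module.Basis.coord_apply, cbr u v, zero_smul]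
      rw [smul_lie, lie_smul, K1 w v, K1 u w, hw]
      module
    · rw [hΔ x, if_neg hx]
      simp [LinearMap.smulRight_apply, Module.Basis.coord_apply, hwdef, smul_smul,
        mul_inv_cancel₀ hx]
    · simp [hΔ, hy, LinearMap.smulRight_apply, Module.Basis.coord_apply]
  · -- both nonzero : D = D₂, z ↦ z - z₁ • e 1
    refine ⟨LinearMap.id - (e.coord 1).smulRight (e 1), ?_, ?_, ?_⟩
    · intro u v
      simp only [LinearMap.sub_apply, LinearMap.id_apply, LinearMap.smulRight_apply,
        Module.Basis.coord_apply, cbr u v, zero_smul, sub_zero]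
      have hue : ⁅u, e 1⁆ = -⁅e 1, u⁆ := (lie_skew _ _).symm
      rw [sub_lie, lie_sub, smul_lie, lie_smul, hue]
      linear_combination (norm := module) (-1 : ℂ) • K1 u v
    · simp [hΔ, hx, LinearMap.sub_apply, Module.Basis.coord_apply]
    · simp [hΔ, hy, LinearMap.sub_apply, Module.Basis.coord_apply]
end

section
/- The thin Lie algebra L admits a 2-local derivation which is not a derivation. -/
/-- The thin Lie algebra admits a 2-local derivation which is not a derivation. -/
theorem thin_admits_twoLocal_not_derivation {L : Type*} [LieRing L] [LieAlgebra ℂ L]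
    (e : Module.Basis ℕ+ ℂ L)
    (hb1 : ∀ n : ℕ+, 2 ≤ n → ⁅e 1, e n⁆ = e (n + 1))
    (hb2 : ∀ i j : ℕ+, 2 ≤ i → 2 ≤ j → ⁅e i, e j⁆ = 0) :
    ∃ Δ : L → L,
      (∀ x y : L, ∃ D : L →ₗ[ℂ] L,
        (∀ u v : L, D ⁅u, v⁆ = ⁅D u, v⁆ + ⁅u, D v⁆) ∧ Δ x = D x ∧ Δ y = D y) ∧
      ¬ ∃ D : L →ₗ[ℂ] L,
          (∀ u v : L, D ⁅u, v⁆ = ⁅D u, v⁆ + ⁅u, D v⁆) ∧ ∀ x : L, Δ x = D x := by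
  classical
  set r : L →ₗ[ℂ] ℂ := e.coord 1 with hrdef
  have hre : ∀ i : ℕ+, r (e i) = if i = 1 then 1 else 0 := by
    intro i
    simp [hrdef, Module.Basis.coord_apply, Module.Basis.repr_self, Finsupp.single_apply]
  have hre1 : r (e 1) = 1 := by simp [hre]
  have two_le : ∀ i : ℕ+, i ≠ 1 → 2 ≤ i := by
    intro i hi
    have h1 : (i : ℕ) ≠ 1 := fun h => hi (PNat.coe_injective (by simpa using h))
    have h2 : 1 ≤ (i : ℕ) := i.one_le
    have h4 : ((2:ℕ+):ℕ) = 2 := rfl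
    exact (PNat.coe_le_coe 2 i).mp (by omega)
  -- on basis elements
  have keyb : ∀ i j : ℕ+, ⁅e i, e j⁆ = r (e i) • ⁅e 1, e j⁆ - r (e j) • ⁅e 1, e i⁆ := by
    intro i j
    rcases eq_or_ne i 1 with hi | hi
    · subst hi
      rcases eq_or_ne j 1 with hj | hj
      · subst hj; simp
      · simp [hre, hj]
    · rcases eq_or_ne j 1 with hj | hj
      · subst hj
        rw [← lie_skew (e 1) (e i)]
        simp [hre, hi]
      · rw [hb2 i j (two_le i hi) (two_le j hj)]
        simp [hre, hi, hj]
  -- fix i, extend over v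
  have key1 : ∀ (i : ℕ+) (v : L), ⁅e i, v⁆ = r (e i) • ⁅e 1, v⁆ - r v • ⁅e 1, e i⁆ := by
    intro i
    have h : (LieAlgebra.ad ℂ L (e i) : L →ₗ[ℂ] L)
        = r (e i) • (LieAlgebra.ad ℂ L (e 1) : L →ₗ[ℂ] L) - r.smulRight ⁅e 1, e i⁆ := by
      apply Module.Basis.ext e
      intro j
      simpa [LieAlgebra.ad_apply] using keyb i j
    intro v
    simpa [LieAlgebra.ad_apply] using LinearMap.congr_fun h v
  have key : ∀ u v : L, ⁅u, v⁆ = r u • ⁅e 1, v⁆ - r v • ⁅e 1, u⁆ := by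
    intro u v
    have h : (-(LieAlgebra.ad ℂ L v) : L →ₗ[ℂ] L)
        = r.smulRight ⁅e 1, v⁆ - r v • (LieAlgebra.ad ℂ L (e 1) : L →ₗ[ℂ] L) := by
      apply Module.Basis.ext e
      intro i
      simp only [LinearMap.neg_apply, LinearMap.sub_apply, LinearMap.smulRight_apply,
        LinearMap.smul_apply, LieAlgebra.ad_apply]
      rw [lie_skew (e i) v]
      exact key1 i v
    have h2 := LinearMap.congr_fun h u
    simp only [LinearMap.neg_apply, LinearMap.sub_apply, LinearMap.smulRight_apply,
      LinearMap.smul_apply, LieAlgebra.ad_apply] at h2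
    rw [← lie_skew u v]
    exact h2
  have rlie1 : ∀ v : L, r ⁅e 1, v⁆ = 0 := by
    have h : (r ∘ₗ (LieAlgebra.ad ℂ L (e 1) : L →ₗ[ℂ] L)) = 0 := by
      apply Module.Basis.ext e
      intro j
      rcases eq_or_ne j 1 with hj | hj
      · subst hj; simp [LieAlgebra.ad_apply]
      · have : ⁅e 1, e j⁆ = e (j + 1) := hb1 j (two_le j hj)
        have hj1 : (j + 1 : ℕ+) ≠ 1 := ne_of_gt (PNat.lt_add_left 1 j)
        simp [LieAlgebra.ad_apply, this, hre, hj1]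
    intro v
    simpa [LieAlgebra.ad_apply] using LinearMap.congr_fun h v
  have rzero : ∀ u v : L, r ⁅u, v⁆ = 0 := by
    intro u v
    rw [key u v]
    simp [rlie1]
  -- derivation family
  have hder : ∀ c : L, r c = 0 → ∀ u v : L,
      ((LinearMap.id : L →ₗ[ℂ] L) + r.smulRight (c - e 1)) ⁅u, v⁆
        = ⁅((LinearMap.id : L →ₗ[ℂ] L) + r.smulRight (c - e 1)) u, v⁆
          + ⁅u, ((LinearMap.id : L →ₗ[ℂ] L) + r.smulRight (c - e 1)) v⁆ := by
    intro c hc u v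
    simp only [LinearMap.add_apply, LinearMap.id_apply, LinearMap.smulRight_apply]
    rw [rzero u v, key (u + r u • (c - e 1)) v, key u (v + r v • (c - e 1)), key u v]
    simp only [map_add, map_smul, map_sub, hc, hre1, lie_add, lie_smul, lie_sub, lie_self,
      zero_sub, smul_eq_mul]
    module
  refine ⟨fun x => if r x = 0 then x else 0, ?_, ?_⟩
  · intro x y
    by_cases hx : r x = 0 <;> by_cases hy : r y = 0
    · refine ⟨(LinearMap.id : L →ₗ[ℂ] L) + r.smulRight ((0 : L) - e 1), hder 0 (map_zero r) , ?_, ?_⟩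
      · simp [hx]
      · simp [hy]
    · -- r x = 0, r y ≠ 0 : kill y, fix x
      refine ⟨(LinearMap.id : L →ₗ[ℂ] L) + r.smulRight ((e 1 - (r y)⁻¹ • y) - e 1), ?_, ?_, ?_⟩
      · apply hder
        simp [map_sub, map_smul, hre1, inv_mul_cancel₀ hy]
      · simp only [LinearMap.add_apply, LinearMap.id_apply, LinearMap.smulRight_apply, hx]
        simp [hx]
      · simp only [LinearMap.add_apply, LinearMap.id_apply, LinearMap.smulRight_apply]
        rw [if_neg hy]
        rw [sub_sub_cancel_left, smul_neg, smul_smul, mul_inv_cancel₀ hy, one_smul]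
        abel
    · refine ⟨(LinearMap.id : L →ₗ[ℂ] L) + r.smulRight ((e 1 - (r x)⁻¹ • x) - e 1), ?_, ?_, ?_⟩
      · apply hder
        simp [map_sub, map_smul, hre1, inv_mul_cancel₀ hx]
      · simp only [LinearMap.add_apply, LinearMap.id_apply, LinearMap.smulRight_apply]
        rw [if_neg hx]
        rw [sub_sub_cancel_left, smul_neg, smul_smul, mul_inv_cancel₀ hx, one_smul]
        abel
      · simp only [LinearMap.add_apply, LinearMap.id_apply, LinearMap.smulRight_apply, hy]
        simp [hy]
    · exact ⟨0, by simp, by simp [hx], by simp [hy]⟩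
  · rintro ⟨D, _, hDall⟩
    have h2 : r (e 2) = 0 := by simp [hre]
    have h12 : r (e 1 + e 2) = 1 := by simp [map_add, h2, hre1]
    have a2 := hDall (e 2)
    have a1 := hDall (e 1)
    have a12 := hDall (e 1 + e 2)
    dsimp only at a2 a1 a12
    rw [if_pos h2] at a2
    rw [if_neg (by rw [hre1]; norm_num)] at a1
    rw [if_neg (by rw [h12]; norm_num)] at a12
    rw [map_add, ← a1, ← a2] at a12
    exact e.ne_zero 2 (by simpa using a12.symm)
end
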